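/- arXiv:2308.01120 — 4 statements merged into one kernel-verified Lean document; each statement's English description precedes it below -/
import Mathlib

section
/- Let λ > 0 and let M : [−λ, λ] → ℝ be a continuous function with M(s) > 0 for all s and M(λ) ≠ M(−λ). For −λ ≤ t ≤ t' ≤ λ define 𝒢(t,t') = (M_t M_{t'}/(M_λ − M_{−λ})²) · ( M_λ² ∫_{t'}^{λ} M_s^{−2} ds + M_λ M_{−λ} ∫_t^{t'} M_s^{−2} ds + M_{−λ}² ∫_{−λ}^{t} M_s^{−2} ds ), and extend 𝒢 symmetrically by 𝒢(t',t) = 𝒢(t,t'). Then for every f ∈ L²([−λ,λ]; ℂ): ∫_{−λ}^{λ} ∫_{−λ}^{λ} f(t) 𝒢(t,t') \overline{f(t')} dt dt' = (M_λ − M_{−λ})^{−2} ∫_{−λ}^{λ} M_u^{−2} | M_{−λ} ∫_u^{λ} f(t) M_t dt + M_λ ∫_{−λ}^{u} f(t) M_t dt |² du. Moreover, if this quantity is 0 then f = 0 almost everywhere; in particular the kernel 𝒢 is positive definite on L²([−λ,λ]). -/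
open MeasureTheory Real Set

private lemma ae_ne_point (c : ℝ) : ∀ᵐ x : ℝ, x ≠ c := by
  rw [ae_iff]
  simp [measure_singleton c]

private lemma ae_zero_of_integral_Ioc {g : ℝ → ℝ} (hg : Integrable g volume)
    (h : ∀ x y : ℝ, x < y → ∫ t in Set.Ioc x y, g t = 0) : g =ᵐ[volume] 0 := by
  have hae : AEMeasurable g volume := hg.aemeasurable
  set gm := hae.mk g with hgm_def
  have hm : Measurable gm := hae.measurable_mk
  have heq : g =ᵐ[volume] gm := hae.ae_eq_mk
  have hgmi : Integrable gm volume := hg.congr heq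
  have h' : ∀ x y : ℝ, x < y → ∫ t in Set.Ioc x y, gm t = 0 := by
    intro x y hxy
    rw [← h x y hxy]
    exact integral_congr_ae (ae_restrict_of_ae heq.symm)
  set ν := volume.withDensity (fun t => ENNReal.ofReal (gm t)) with hν_def
  set ν' := volume.withDensity (fun t => ENNReal.ofReal (-gm t)) with hν'_def
  have hfin : ∀ (h : ℝ → ℝ), Integrable h volume →
      (∫⁻ t, ENNReal.ofReal (h t)) ≠ ⊤ := by
    intro h hint
    refine ne_top_of_le_ne_top hint.2.ne ?_
    refine lintegral_mono fun t => ?_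
    exact Real.ofReal_le_enorm _
  have hfin' : ∀ (s : Set ℝ) (h : ℝ → ℝ), Integrable h volume →
      (∫⁻ t in s, ENNReal.ofReal (h t)) ≠ ⊤ := by
    intro s h hint
    refine ne_top_of_le_ne_top (hfin h hint) ?_
    exact lintegral_mono' Measure.restrict_le_self le_rfl
  have hνν' : ν = ν' := by
    refine Measure.ext_of_Ioc' ν ν' (fun a b hab => ?_) (fun a b hab => ?_)
    · rw [hν_def, withDensity_apply _ measurableSet_Ioc]
      exact hfin' _ _ hgmi
    · rw [hν_def, hν'_def, withDensity_apply _ measurableSet_Ioc,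
        withDensity_apply _ measurableSet_Ioc]
      have hint : Integrable gm (volume.restrict (Set.Ioc a b)) :=
        hgmi.restrict
      have := integral_eq_lintegral_pos_part_sub_lintegral_neg_part hint
      rw [h' a b hab] at this
      have h1 := hfin' (Set.Ioc a b) gm hgmi
      have h2 := hfin' (Set.Ioc a b) (fun t => -gm t) (hgmi.neg)
      have := sub_eq_zero.mp this.symm
      exact ((ENNReal.toReal_eq_toReal_iff' h1 h2).mp this).symm ▸ rfl
  have hsing : ν ⟂ₘ ν' := withDensity_ofReal_mutuallySingular hm
  rw [hνν'] at hsing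
  have hν'0 : ν' = 0 := Measure.MutuallySingular.self_iff _ |>.mp hsing
  have hν0 : ν = 0 := hνν'.trans hν'0
  have hget : ∀ (h : ℝ → ℝ), Measurable h →
      volume.withDensity (fun t => ENNReal.ofReal (h t)) = 0 →
      ∀ᵐ t : ℝ, h t ≤ 0 := by
    intro h hhm h0
    have := (withDensity_eq_zero_iff (by fun_prop)).mp h0
    filter_upwards [this] with t ht
    simpa [ENNReal.ofReal_eq_zero] using ht
  have h1 : ∀ᵐ t : ℝ, gm t ≤ 0 := hget gm hm hν0
  have h2 : ∀ᵐ t : ℝ, -gm t ≤ 0 := hget _ hm.neg hν'0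
  filter_upwards [h1, h2, heq] with t ht1 ht2 ht3
  simp only [Pi.zero_apply, ht3]
  linarith

private lemma ae_zero_of_integral_Ioc_complex {g : ℝ → ℂ} (hg : Integrable g volume)
    (h : ∀ x y : ℝ, x < y → ∫ t in Set.Ioc x y, g t = 0) : g =ᵐ[volume] 0 := by
  have hre : (fun t => (g t).re) =ᵐ[volume] (0 : ℝ → ℝ) := by
    refine ae_zero_of_integral_Ioc ?_ ?_
    · simpa using hg.re
    · intro x y hxy
      have h2 := integral_re (μ := volume.restrict (Set.Ioc x y)) hg.restrict
      simp only [RCLike.re_to_complex] at h2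
      rw [h2, h x y hxy, Complex.zero_re]
  have him : (fun t => (g t).im) =ᵐ[volume] (0 : ℝ → ℝ) := by
    refine ae_zero_of_integral_Ioc ?_ ?_
    · simpa using hg.im
    · intro x y hxy
      have h2 := integral_im (μ := volume.restrict (Set.Ioc x y)) hg.restrict
      simp only [RCLike.im_to_complex] at h2
      rw [h2, h x y hxy, Complex.zero_im]
  filter_upwards [hre, him] with t h1 h2
  simp only [Pi.zero_apply] at h1 h2 ⊢
  exact Complex.ext h1 h2


/-- The symmetric kernel `𝒢(t,t')` associated with a positive weight `M` on `[-λ,λ]`. -/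
noncomputable def Gdet (lam : ℝ) (M : ℝ → ℝ) (t t' : ℝ) : ℝ :=
  (M t * M t' / (M lam - M (-lam)) ^ 2) *
    ((M lam) ^ 2 * (∫ s in max t t'..lam, 1 / (M s) ^ 2) +
     M lam * M (-lam) * (∫ s in min t t'..max t t', 1 / (M s) ^ 2) +
     (M (-lam)) ^ 2 * (∫ s in (-lam)..min t t', 1 / (M s) ^ 2))

/-- The explicit nonnegative quadratic form associated with the kernel `𝒢`. -/
noncomputable def Qform (lam : ℝ) (M : ℝ → ℝ) (f : ℝ → ℂ) : ℝ :=
  ((M lam - M (-lam)) ^ 2)⁻¹ *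
    ∫ u in (-lam)..lam, (1 / (M u) ^ 2) *
      ‖(M (-lam) : ℂ) * (∫ t in u..lam, f t * (M t : ℂ)) +
        (M lam : ℂ) * ∫ t in (-lam)..u, f t * (M t : ℂ)‖ ^ 2

/-- Quadratic-form identity for the kernel `𝒢`, and positive definiteness: the quadratic
form of `𝒢` at `f ∈ L²([-λ,λ];ℂ)` equals an explicit nonnegative integral, and it vanishes
only if `f = 0` almost everywhere. -/
theorem Gdet_quadratic_form
    (lam : ℝ) (hlam : 0 < lam) (M : ℝ → ℝ)
    (hM : ContinuousOn M (Set.Icc (-lam) lam))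
    (hMpos : ∀ s ∈ Set.Icc (-lam) lam, 0 < M s)
    (hMne : M lam ≠ M (-lam))
    (f : ℝ → ℂ) (hf : MemLp f 2 (volume.restrict (Set.Icc (-lam) lam))) :
    ((∫ t in (-lam)..lam, ∫ t' in (-lam)..lam,
        f t * (Gdet lam M t t' : ℂ) * (starRingEnd ℂ) (f t'))
      = (Qform lam M f : ℂ)) ∧
    (Qform lam M f = 0 → f =ᵐ[volume.restrict (Set.Icc (-lam) lam)] 0) := by
  have hll : -lam ≤ lam := by linarith
  set S : Set ℝ := Set.Ioc (-lam) lam with hS_def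
  have hS : MeasurableSet S := measurableSet_Ioc
  set μ : Measure ℝ := volume.restrict S with hμ_def
  have hIcc : volume.restrict (Set.Icc (-lam) lam) = μ :=
    (Measure.restrict_congr_set Ioc_ae_eq_Icc).symm
  haveI hfinμ : IsFiniteMeasure μ := by
    constructor
    rw [hμ_def, Measure.restrict_apply_univ]
    exact measure_Ioc_lt_top
  have hSIcc : S ⊆ Set.Icc (-lam) lam := Set.Ioc_subset_Icc_self
  -- basic positivity
  have hmem_l : -lam ∈ Set.Icc (-lam) lam := by constructor <;> linarith
  have hmem_r : lam ∈ Set.Icc (-lam) lam := by constructor <;> linarith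
  have ha : 0 < M (-lam) := hMpos _ hmem_l
  have hb : 0 < M lam := hMpos _ hmem_r
  have hba : M lam - M (-lam) ≠ 0 := sub_ne_zero.mpr hMne
  -- f and g integrable
  have hf' : MemLp f 2 μ := by rwa [hIcc] at hf
  have hfi : Integrable f μ := hf'.integrable (by norm_num)
  obtain ⟨CM, hCM⟩ : ∃ C, ∀ s ∈ Set.Icc (-lam) lam, |M s| ≤ C := by
    obtain ⟨C, hC⟩ := (isCompact_Icc).exists_bound_of_continuousOn hM
    exact ⟨C, fun s hs => by simpa using hC s hs⟩
  set g : ℝ → ℂ := fun t => f t * (M t : ℂ) with hg_def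
  have hM_aesm : AEStronglyMeasurable M μ :=
    (hM.mono hSIcc).aestronglyMeasurable hS
  have hg_aesm : AEStronglyMeasurable g μ :=
    hfi.aestronglyMeasurable.mul (Complex.continuous_ofReal.comp_aestronglyMeasurable hM_aesm)
  have hae_memS : ∀ᵐ t ∂μ, t ∈ S := ae_restrict_mem hS
  have hgi : Integrable g μ := by
    refine Integrable.mono' ((hfi.norm.const_mul CM)) hg_aesm ?_
    filter_upwards [hae_memS] with t ht
    rw [hg_def]
    simp only [norm_mul, Complex.norm_real, Real.norm_eq_abs]
    rw [mul_comm]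
    exact mul_le_mul_of_nonneg_right (hCM t (hSIcc ht)) (norm_nonneg _)
  -- the weight w
  set w : ℝ → ℝ := fun s => 1 / M s ^ 2 with hw_def
  have hw_cont : ContinuousOn w (Set.Icc (-lam) lam) :=
    continuousOn_const.div (hM.pow 2) (fun x hx => pow_ne_zero 2 (hMpos x hx).ne')
  have hw_nonneg : ∀ s, 0 ≤ w s := fun s => by rw [hw_def]; positivity
  have hw_aesm : AEStronglyMeasurable w μ := (hw_cont.mono hSIcc).aestronglyMeasurable hS
  obtain ⟨Cw, hCw⟩ : ∃ C, ∀ s ∈ Set.Icc (-lam) lam, |w s| ≤ C := by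
    obtain ⟨C, hC⟩ := (isCompact_Icc).exists_bound_of_continuousOn hw_cont
    exact ⟨C, fun s hs => by simpa using hC s hs⟩
  -- the coefficient function c
  set c : ℝ → ℝ → ℝ := fun u t => if u < t then M (-lam) else M lam with hc_def
  set K : ℝ := max (M (-lam)) (M lam) with hK_def
  have hK0 : 0 ≤ K := le_trans ha.le (le_max_left _ _)
  have hc_bound : ∀ u t, |c u t| ≤ K := by
    intro u t
    rw [hc_def]
    dsimp only
    split
    · rw [abs_of_pos ha]; exact le_max_left _ _
    · rw [abs_of_pos hb]; exact le_max_right _ _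
  have hc_meas2 : Measurable (fun p : ℝ × ℝ => c p.1 p.2) := by
    apply Measurable.ite (measurableSet_lt measurable_fst measurable_snd) <;>
      exact measurable_const
  have hc_measu : ∀ u, Measurable (fun t => c u t) :=
    fun u => hc_meas2.comp (measurable_const.prodMk measurable_id)
  have hc_meast : ∀ t, Measurable (fun u => c u t) :=
    fun t => hc_meas2.comp (measurable_id.prodMk measurable_const)
  -- integrability of g * c
  have hgc_aesm : ∀ u, AEStronglyMeasurable (fun t => g t * (c u t : ℂ)) μ := fun u =>
    hg_aesm.mul ((Complex.continuous_ofReal.comp_aestronglyMeasurable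
      ((hc_measu u).aestronglyMeasurable)))
  have hgc_int : ∀ u, Integrable (fun t => g t * (c u t : ℂ)) μ := by
    intro u
    refine Integrable.mono' (hgi.norm.const_mul K) (hgc_aesm u) ?_
    filter_upwards with t
    rw [norm_mul, Complex.norm_real, Real.norm_eq_abs, mul_comm]
    exact mul_le_mul_of_nonneg_right (hc_bound u t) (norm_nonneg _)
  have hgc_ii : ∀ u x y, -lam ≤ x → x ≤ y → y ≤ lam →
      IntervalIntegrable (fun t => g t * (c u t : ℂ)) volume x y := by
    intro u x y hx hxy hy
    rw [intervalIntegrable_iff_integrableOn_Ioc_of_le hxy]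
    refine (hgc_int u).mono_measure ?_
    rw [hμ_def]
    exact Measure.restrict_mono (Set.Ioc_subset_Ioc hx hy) le_rfl
  -- the function H
  set H : ℝ → ℂ := fun u => ∫ t, g t * (c u t : ℂ) ∂μ with hH_def
  have hH_aesm : AEStronglyMeasurable H μ := by
    have : AEStronglyMeasurable (fun p : ℝ × ℝ => g p.2 * (c p.1 p.2 : ℂ)) (μ.prod μ) :=
      hg_aesm.comp_snd.mul ((Complex.continuous_ofReal.comp_aestronglyMeasurable
        (hc_meas2.aestronglyMeasurable)))
    exact this.integral_prod_right'
  set CH : ℝ := ∫ t, K * ‖g t‖ ∂μ with hCH_def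
  have hCH0 : 0 ≤ CH := integral_nonneg fun t => mul_nonneg hK0 (norm_nonneg _)
  have hH_bound : ∀ u, ‖H u‖ ≤ CH := by
    intro u
    refine norm_integral_le_of_norm_le (hgi.norm.const_mul K) ?_
    filter_upwards with t
    rw [norm_mul, Complex.norm_real, Real.norm_eq_abs, mul_comm]
    exact mul_le_mul_of_nonneg_right (hc_bound u t) (norm_nonneg _)
  -- Claim 1: splitting of H
  have hH_split : ∀ u ∈ Set.Icc (-lam) lam,
      H u = (M (-lam) : ℂ) * (∫ t in u..lam, g t) + (M lam : ℂ) * (∫ t in (-lam)..u, g t) := by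
    intro u hu
    have h1 : IntervalIntegrable (fun t => g t * (c u t : ℂ)) volume (-lam) u :=
      hgc_ii u _ _ le_rfl hu.1 hu.2
    have h2 : IntervalIntegrable (fun t => g t * (c u t : ℂ)) volume u lam :=
      hgc_ii u _ _ hu.1 hu.2 le_rfl
    have hsplit := intervalIntegral.integral_add_adjacent_intervals h1 h2
    have hHu : H u = ∫ t in (-lam)..lam, g t * (c u t : ℂ) := by
      rw [intervalIntegral.integral_of_le hll]
    have e1 : ∫ t in (-lam)..u, g t * (c u t : ℂ) = (M lam : ℂ) * ∫ t in (-lam)..u, g t := by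
      rw [intervalIntegral.integral_of_le hu.1, intervalIntegral.integral_of_le hu.1,
        ← integral_const_mul]
      refine setIntegral_congr_fun measurableSet_Ioc fun t ht => ?_
      simp only [hc_def]
      rw [if_neg (not_lt.mpr ht.2)]
      ring
    have e2 : ∫ t in u..lam, g t * (c u t : ℂ) = (M (-lam) : ℂ) * ∫ t in u..lam, g t := by
      rw [intervalIntegral.integral_of_le hu.2, intervalIntegral.integral_of_le hu.2,
        ← integral_const_mul]
      refine setIntegral_congr_fun measurableSet_Ioc fun t ht => ?_
      simp only [hc_def]
      rw [if_pos ht.1]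
      ring
    rw [hHu, ← hsplit, e1, e2]
    ring
  -- integrability of w * c * c on subintervals
  have hwcc_ii : ∀ t t' x y, -lam ≤ x → x ≤ y → y ≤ lam →
      IntervalIntegrable (fun u => w u * c u t * c u t') volume x y := by
    intro t t' x y hx hxy hy
    rw [intervalIntegrable_iff_integrableOn_Ioc_of_le hxy]
    haveI : IsFiniteMeasure (volume.restrict (Set.Ioc x y)) := by
      constructor
      rw [Measure.restrict_apply_univ]
      exact measure_Ioc_lt_top
    have hle : volume.restrict (Set.Ioc x y) ≤ μ := by
      rw [hμ_def]
      exact Measure.restrict_mono (Set.Ioc_subset_Ioc hx hy) le_rfl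
    have haesm : AEStronglyMeasurable (fun u => w u * c u t * c u t')
        (volume.restrict (Set.Ioc x y)) :=
      ((hw_aesm.mono_measure hle).mul ((hc_meast t).aestronglyMeasurable)).mul
        ((hc_meast t').aestronglyMeasurable)
    refine Integrable.mono' (integrable_const (Cw * K * K)) haesm ?_
    filter_upwards [ae_restrict_mem measurableSet_Ioc] with u hu
    have huI : u ∈ Set.Icc (-lam) lam := ⟨le_trans hx hu.1.le, le_trans hu.2 hy⟩
    rw [Real.norm_eq_abs, abs_mul, abs_mul]
    have h1 := hCw u huI
    have h2 := hc_bound u t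
    have h3 := hc_bound u t'
    have hw0 := abs_nonneg (w u)
    have hc0 := abs_nonneg (c u t)
    have hc0' := abs_nonneg (c u t')
    have hCw0 : 0 ≤ Cw := le_trans hw0 h1
    exact mul_le_mul (mul_le_mul h1 h2 hc0 hCw0) h3 hc0' (mul_nonneg hCw0 hK0)
  -- the kernel κ
  set κ : ℝ → ℝ → ℝ := fun t t' =>
    (M lam) ^ 2 * (∫ s in max t t'..lam, w s) +
      M lam * M (-lam) * (∫ s in min t t'..max t t', w s) +
      (M (-lam)) ^ 2 * (∫ s in (-lam)..min t t', w s) with hκ_def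
  -- Claim 2: the kernel computation, ordered case
  have hker : ∀ t t', t ∈ S → t' ∈ S → t ≤ t' →
      (∫ u in (-lam)..lam, w u * c u t * c u t') =
        (M lam) ^ 2 * (∫ s in t'..lam, w s) + M lam * M (-lam) * (∫ s in t..t', w s) +
          (M (-lam)) ^ 2 * (∫ s in (-lam)..t, w s) := by
    intro t t' ht ht' htt
    have i1 := hwcc_ii t t' (-lam) t le_rfl ht.1.le ht.2
    have i2 := hwcc_ii t t' t t' ht.1.le htt ht'.2
    have i3 := hwcc_ii t t' t' lam (le_trans ht.1.le htt) ht'.2 le_rfl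
    have i23 := hwcc_ii t t' t lam ht.1.le ht.2 le_rfl
    have s2 := intervalIntegral.integral_add_adjacent_intervals i2 i3
    have s1 := intervalIntegral.integral_add_adjacent_intervals i1 i23
    have p1 : ∫ u in (-lam)..t, w u * c u t * c u t'
        = (M (-lam)) ^ 2 * ∫ s in (-lam)..t, w s := by
      rw [← intervalIntegral.integral_const_mul]
      refine intervalIntegral.integral_congr_ae ?_
      filter_upwards [ae_ne_point t] with u hut hu
      rw [Set.uIoc_of_le ht.1.le] at hu
      have h1 : u < t := lt_of_le_of_ne hu.2 hut
      simp only [hc_def]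
      rw [if_pos h1, if_pos (lt_of_lt_of_le h1 htt)]
      ring
    have p2 : ∫ u in t..t', w u * c u t * c u t'
        = M lam * M (-lam) * ∫ s in t..t', w s := by
      rw [← intervalIntegral.integral_const_mul]
      refine intervalIntegral.integral_congr_ae ?_
      filter_upwards [ae_ne_point t'] with u hut' hu
      rw [Set.uIoc_of_le htt] at hu
      have h1 : u < t' := lt_of_le_of_ne hu.2 hut'
      simp only [hc_def]
      rw [if_neg (not_lt.mpr hu.1.le), if_pos h1]
      ring
    have p3 : ∫ u in t'..lam, w u * c u t * c u t'
        = (M lam) ^ 2 * ∫ s in t'..lam, w s := by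
      rw [← intervalIntegral.integral_const_mul]
      refine intervalIntegral.integral_congr_ae ?_
      filter_upwards with u hu
      rw [Set.uIoc_of_le ht'.2] at hu
      simp only [hc_def]
      rw [if_neg (not_lt.mpr (le_trans htt hu.1.le)), if_neg (not_lt.mpr hu.1.le)]
      ring
    rw [← s1, ← s2, p1, p2, p3]
    ring
  -- Claim 2': symmetric version
  have hker' : ∀ t ∈ S, ∀ t' ∈ S,
      (∫ u in (-lam)..lam, w u * c u t * c u t') = κ t t' := by
    intro t ht t' ht'
    rcases le_total t t' with h | h
    · rw [hκ_def]
      dsimp only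
      rw [max_eq_right h, min_eq_left h]
      exact hker t t' ht ht' h
    · have hsw : ∀ u, w u * c u t * c u t' = w u * c u t' * c u t := fun u => by ring
      rw [hκ_def]
      dsimp only
      rw [max_eq_left h, min_eq_right h]
      simp only [hsw]
      exact hker t' t ht' ht h
  -- ====== Fubini chain ======
  have hCw0 : 0 ≤ Cw := le_trans (abs_nonneg _) (hCw _ hmem_l)
  have hae_prod : ∀ᵐ p ∂(μ.prod μ), p.1 ∈ S ∧ p.2 ∈ S := by
    rw [hμ_def, Measure.prod_restrict]
    filter_upwards [ae_restrict_mem (hS.prod hS)] with p hp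
    exact hp
  have hH_eq : ∀ u : ℝ, H u = ∫ t, g t * ((c u t : ℝ) : ℂ) ∂μ := fun u => rfl
  have hA : (∫ u, (w u : ℂ) * H u * (starRingEnd ℂ) (H u) ∂μ)
      = ∫ t, ∫ t', (g t * (starRingEnd ℂ) (g t')) * (κ t t' : ℂ) ∂μ ∂μ := by
    have hconjH : ∀ u, (starRingEnd ℂ) (H u)
        = ∫ t', (starRingEnd ℂ) (g t') * ((c u t' : ℝ) : ℂ) ∂μ := by
      intro u
      have h1 : ∫ t', (starRingEnd ℂ) (g t' * ((c u t' : ℝ) : ℂ)) ∂μ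
          = (starRingEnd ℂ) (∫ t', g t' * ((c u t' : ℝ) : ℂ) ∂μ) := integral_conj
      have h2 : ∀ t' : ℝ, (starRingEnd ℂ) (g t' * ((c u t' : ℝ) : ℂ))
          = (starRingEnd ℂ) (g t') * ((c u t' : ℝ) : ℂ) := by
        intro t'
        rw [map_mul, Complex.conj_ofReal]
      rw [hH_eq u, ← h1]
      refine integral_congr_ae (Filter.Eventually.of_forall fun t' => ?_)
      dsimp only
      rw [h2 t']
    have step1 : (∫ u, (w u : ℂ) * H u * (starRingEnd ℂ) (H u) ∂μ)
        = ∫ u, ∫ t, (w u : ℂ) * (starRingEnd ℂ) (H u) * (g t * ((c u t : ℝ) : ℂ)) ∂μ ∂μ := by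
      refine integral_congr_ae (Filter.Eventually.of_forall fun u => ?_)
      dsimp only
      rw [integral_const_mul, ← hH_eq u]
      ring
    have hΦ_int : Integrable (Function.uncurry fun u t =>
        (w u : ℂ) * (starRingEnd ℂ) (H u) * (g t * ((c u t : ℝ) : ℂ))) (μ.prod μ) := by
      rw [Function.uncurry_def]
      have hbd : Integrable (fun p : ℝ × ℝ => (1 : ℝ) * (Cw * CH * K * ‖g p.2‖)) (μ.prod μ) :=
        (integrable_const (1 : ℝ)).mul_prod (hgi.norm.const_mul (Cw * CH * K))
      refine Integrable.mono' hbd ?_ ?_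
      · refine AEStronglyMeasurable.mul (AEStronglyMeasurable.mul ?_ ?_) ?_
        · exact (Complex.continuous_ofReal.comp_aestronglyMeasurable hw_aesm).comp_fst
        · exact (Complex.continuous_conj.comp_aestronglyMeasurable hH_aesm).comp_fst
        · exact hg_aesm.comp_snd.mul
            (Complex.continuous_ofReal.comp_aestronglyMeasurable hc_meas2.aestronglyMeasurable)
      · filter_upwards [hae_prod] with p hp
        have l1 : |w p.1| ≤ Cw := hCw _ (hSIcc hp.1)
        have l2 : ‖H p.1‖ ≤ CH := hH_bound _
        have l3 : |c p.1 p.2| ≤ K := hc_bound _ _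
        rw [one_mul, norm_mul, norm_mul, norm_mul, Complex.norm_real, Complex.norm_real,
          RCLike.norm_conj, Real.norm_eq_abs, Real.norm_eq_abs]
        calc |w p.1| * ‖H p.1‖ * (‖g p.2‖ * |c p.1 p.2|)
            = (|w p.1| * ‖H p.1‖ * |c p.1 p.2|) * ‖g p.2‖ := by ring
          _ ≤ (Cw * CH * K) * ‖g p.2‖ := by
              refine mul_le_mul_of_nonneg_right ?_ (norm_nonneg _)
              exact mul_le_mul (mul_le_mul l1 l2 (norm_nonneg _) hCw0) l3 (abs_nonneg _)
                (mul_nonneg hCw0 hCH0)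
          _ = Cw * CH * K * ‖g p.2‖ := by ring
    have swap1 := integral_integral_swap hΦ_int
    rw [step1, swap1]
    rw [hμ_def]
    refine setIntegral_congr_fun hS fun t ht => ?_
    have pull1 : (∫ u, (w u : ℂ) * (starRingEnd ℂ) (H u) * (g t * ((c u t : ℝ) : ℂ)) ∂μ)
        = g t * ∫ u, ((w u : ℂ) * ((c u t : ℝ) : ℂ)) * (starRingEnd ℂ) (H u) ∂μ := by
      rw [← integral_const_mul]
      refine integral_congr_ae (Filter.Eventually.of_forall fun u => ?_)
      dsimp only
      ring
    rw [pull1]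
    have step2 : (∫ u, ((w u : ℂ) * ((c u t : ℝ) : ℂ)) * (starRingEnd ℂ) (H u) ∂μ)
        = ∫ u, ∫ t', ((w u : ℂ) * ((c u t : ℝ) : ℂ))
            * ((starRingEnd ℂ) (g t') * ((c u t' : ℝ) : ℂ)) ∂μ ∂μ := by
      refine integral_congr_ae (Filter.Eventually.of_forall fun u => ?_)
      dsimp only
      rw [integral_const_mul, ← hconjH u]
    have hΨ_int : Integrable (Function.uncurry fun u t' =>
        ((w u : ℂ) * ((c u t : ℝ) : ℂ))
          * ((starRingEnd ℂ) (g t') * ((c u t' : ℝ) : ℂ))) (μ.prod μ) := by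
      rw [Function.uncurry_def]
      have hbd : Integrable (fun p : ℝ × ℝ => (1 : ℝ) * (Cw * K * K * ‖g p.2‖)) (μ.prod μ) :=
        (integrable_const (1 : ℝ)).mul_prod (hgi.norm.const_mul (Cw * K * K))
      refine Integrable.mono' hbd ?_ ?_
      · refine AEStronglyMeasurable.mul (AEStronglyMeasurable.mul ?_ ?_) ?_
        · exact (Complex.continuous_ofReal.comp_aestronglyMeasurable hw_aesm).comp_fst
        · refine Complex.continuous_ofReal.comp_aestronglyMeasurable ?_
          exact (hc_meas2.comp (measurable_fst.prodMk measurable_const)).aestronglyMeasurable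
        · refine AEStronglyMeasurable.mul ?_ ?_
          · exact (Complex.continuous_conj.comp_aestronglyMeasurable hg_aesm).comp_snd
          · exact Complex.continuous_ofReal.comp_aestronglyMeasurable
              hc_meas2.aestronglyMeasurable
      · filter_upwards [hae_prod] with p hp
        have l1 : |w p.1| ≤ Cw := hCw _ (hSIcc hp.1)
        have l3 : |c p.1 t| ≤ K := hc_bound _ _
        have l4 : |c p.1 p.2| ≤ K := hc_bound _ _
        rw [one_mul, norm_mul, norm_mul, norm_mul, Complex.norm_real, Complex.norm_real,
          Complex.norm_real, RCLike.norm_conj, Real.norm_eq_abs, Real.norm_eq_abs,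
          Real.norm_eq_abs]
        calc |w p.1| * |c p.1 t| * (‖g p.2‖ * |c p.1 p.2|)
            = (|w p.1| * |c p.1 t| * |c p.1 p.2|) * ‖g p.2‖ := by ring
          _ ≤ (Cw * K * K) * ‖g p.2‖ := by
              refine mul_le_mul_of_nonneg_right ?_ (norm_nonneg _)
              exact mul_le_mul (mul_le_mul l1 l3 (abs_nonneg _) hCw0) l4 (abs_nonneg _)
                (mul_nonneg hCw0 hK0)
          _ = Cw * K * K * ‖g p.2‖ := by ring
    have swap2 := integral_integral_swap hΨ_int
    rw [step2, swap2, ← integral_const_mul]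
    show (∫ t' : ℝ, _ ∂μ) = _
    rw [hμ_def]
    refine setIntegral_congr_fun hS fun t' ht' => ?_
    have pull2 : (∫ u, ((w u : ℂ) * ((c u t : ℝ) : ℂ))
          * ((starRingEnd ℂ) (g t') * ((c u t' : ℝ) : ℂ)) ∂μ)
        = (starRingEnd ℂ) (g t') * ∫ u, (((w u * c u t * c u t' : ℝ)) : ℂ) ∂μ := by
      rw [← integral_const_mul]
      refine integral_congr_ae (Filter.Eventually.of_forall fun u => ?_)
      dsimp only
      push_cast
      ring
    rw [pull2]
    have hofReal : (∫ u, (((w u * c u t * c u t' : ℝ)) : ℂ) ∂μ)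
        = ((∫ u, w u * c u t * c u t' ∂μ : ℝ) : ℂ) := integral_ofReal
    have hreal : (∫ u, w u * c u t * c u t' ∂μ) = κ t t' := by
      rw [← hker' t ht t' ht', intervalIntegral.integral_of_le hll, hμ_def]
    rw [hofReal, hreal]
    ring
  -- ====== identification of the quadratic form ======
  have hH_split' : ∀ u ∈ Set.Icc (-lam) lam,
      H u = (M (-lam) : ℂ) * (∫ t in u..lam, f t * (M t : ℂ))
        + (M lam : ℂ) * (∫ t in (-lam)..u, f t * (M t : ℂ)) :=
    fun u hu => hH_split u hu
  have hQ : ((Qform lam M f : ℝ) : ℂ)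
      = ((((M lam : ℂ) - (M (-lam) : ℂ)) ^ 2)⁻¹) *
          ∫ u, (w u : ℂ) * H u * (starRingEnd ℂ) (H u) ∂μ := by
    rw [Qform, Complex.ofReal_mul, intervalIntegral.integral_of_le hll]
    push_cast
    congr 1
    have hcast : ∀ (h : ℝ → ℝ), ((∫ x, h x ∂μ : ℝ) : ℂ) = ∫ x, ((h x : ℝ) : ℂ) ∂μ :=
      fun h => (integral_ofReal (𝕜 := ℂ)).symm
    rw [hμ_def] at hcast
    rw [hcast]
    rw [← hμ_def]
    refine setIntegral_congr_fun hS fun u hu => ?_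
    simp only [hw_def]
    rw [hH_split' u (hSIcc hu), mul_assoc, Complex.mul_conj, Complex.normSq_eq_norm_sq]
    push_cast
    ring
  have hGdet : ∀ t t', Gdet lam M t t'
      = (M t * M t' / (M lam - M (-lam)) ^ 2) * κ t t' := fun t t' => rfl
  have hLHS : (∫ t in (-lam)..lam, ∫ t' in (-lam)..lam,
        f t * (Gdet lam M t t' : ℂ) * (starRingEnd ℂ) (f t'))
      = ((((M lam : ℂ) - (M (-lam) : ℂ)) ^ 2)⁻¹) *
          ∫ t, ∫ t', (g t * (starRingEnd ℂ) (g t')) * (κ t t' : ℂ) ∂μ ∂μ := by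
    rw [intervalIntegral.integral_of_le hll, ← integral_const_mul]
    show _ = (∫ t : ℝ, _ ∂μ)
    rw [hμ_def]
    refine setIntegral_congr_fun hS fun t ht => ?_
    rw [intervalIntegral.integral_of_le hll, ← integral_const_mul]
    show _ = (∫ t' : ℝ, _ ∂μ)
    rw [hμ_def]
    refine setIntegral_congr_fun hS fun t' ht' => ?_
    rw [hGdet t t']
    simp only [hg_def]
    rw [map_mul, Complex.conj_ofReal]
    push_cast
    ring
  constructor
  · calc (∫ t in (-lam)..lam, ∫ t' in (-lam)..lam,
        f t * (Gdet lam M t t' : ℂ) * (starRingEnd ℂ) (f t'))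
        = ((((M lam : ℂ) - (M (-lam) : ℂ)) ^ 2)⁻¹) *
            ∫ t, ∫ t', (g t * (starRingEnd ℂ) (g t')) * (κ t t' : ℂ) ∂μ ∂μ := hLHS
      _ = ((((M lam : ℂ) - (M (-lam) : ℂ)) ^ 2)⁻¹) *
            ∫ u, (w u : ℂ) * H u * (starRingEnd ℂ) (H u) ∂μ := by rw [hA]
      _ = ((Qform lam M f : ℝ) : ℂ) := hQ.symm
  -- ====== positive definiteness ======
  · intro hQ0
    have hg_ii : ∀ x y, -lam ≤ x → x ≤ y → y ≤ lam →
        IntervalIntegrable g volume x y := by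
      intro x y hx hxy hy
      rw [intervalIntegrable_iff_integrableOn_Ioc_of_le hxy]
      refine hgi.mono_measure ?_
      rw [hμ_def]
      exact Measure.restrict_mono (Set.Ioc_subset_Ioc hx hy) le_rfl
    set X : ℝ → ℂ := fun u => (M (-lam) : ℂ) * (∫ t in u..lam, g t)
      + (M lam : ℂ) * (∫ t in (-lam)..u, g t) with hX_def
    have hXH : ∀ u ∈ Set.Icc (-lam) lam, X u = H u := fun u hu => (hH_split u hu).symm
    have hR0 : (∫ u, w u * ‖X u‖ ^ 2 ∂μ) = 0 := by
      have hc0 : ((M lam - M (-lam)) ^ 2)⁻¹ ≠ 0 := inv_ne_zero (pow_ne_zero 2 hba)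
      have h1 : ((M lam - M (-lam)) ^ 2)⁻¹ *
          (∫ u in (-lam)..lam, w u * ‖X u‖ ^ 2) = 0 := hQ0
      have h2 := (mul_eq_zero.mp h1).resolve_left hc0
      rwa [intervalIntegral.integral_of_le hll, ← hμ_def] at h2
    have hnn : 0 ≤ fun u => w u * ‖X u‖ ^ 2 := by
      intro u
      simp only [Pi.zero_apply]
      exact mul_nonneg (hw_nonneg u) (pow_nonneg (norm_nonneg _) 2)
    have hint : Integrable (fun u => w u * ‖X u‖ ^ 2) μ := by
      have haesm : AEStronglyMeasurable (fun u => w u * ‖X u‖ ^ 2) μ := by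
        refine AEStronglyMeasurable.congr (f := fun u => w u * ‖H u‖ ^ 2) ?_ ?_
        · exact hw_aesm.mul (hH_aesm.norm.pow 2)
        · filter_upwards [ae_restrict_mem hS] with u hu
          rw [hXH u (hSIcc hu)]
      refine Integrable.mono' (integrable_const (Cw * CH ^ 2)) haesm ?_
      filter_upwards [ae_restrict_mem hS] with u hu
      have l1 : |w u| ≤ Cw := hCw _ (hSIcc hu)
      have l2 : ‖X u‖ ≤ CH := by rw [hXH u (hSIcc hu)]; exact hH_bound u
      have l3 : (0:ℝ) ≤ ‖X u‖ := norm_nonneg _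
      rw [Real.norm_eq_abs, abs_mul, abs_of_nonneg (pow_nonneg l3 2)]
      have l4 : ‖X u‖ ^ 2 ≤ CH ^ 2 := by nlinarith
      exact mul_le_mul l1 l4 (by positivity) (le_trans (abs_nonneg _) l1)
    have hae0 : (fun u => w u * ‖X u‖ ^ 2) =ᵐ[μ] 0 :=
      (integral_eq_zero_iff_of_nonneg hnn hint).mp hR0
    have hX0 : ∀ᵐ u ∂μ, X u = 0 := by
      filter_upwards [hae0, ae_restrict_mem hS] with u h1 h2
      have hMu : 0 < M u := hMpos u (hSIcc h2)
      have hw_pos : 0 < w u := by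
        rw [hw_def]
        dsimp only
        exact one_div_pos.mpr (pow_pos hMu 2)
      simp only [Pi.zero_apply] at h1
      have h3 := (mul_eq_zero.mp h1).resolve_left hw_pos.ne'
      have hnorm : ‖X u‖ = 0 := by nlinarith [norm_nonneg (X u)]
      exact norm_eq_zero.mp hnorm
    set G : ℝ → ℂ := fun u => ∫ t in (-lam)..u, g t with hG_def
    set Tc : ℂ := ∫ t in (-lam)..lam, g t with hTc_def
    have hgIcc : IntegrableOn g (Set.Icc (-lam) lam) volume := by
      rw [IntegrableOn, hIcc]
      exact hgi
    have hG_cont : ContinuousOn G (Set.Icc (-lam) lam) := by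
      refine (intervalIntegral.continuousOn_primitive hgIcc).congr ?_
      intro u hu
      rw [hG_def]
      exact intervalIntegral.integral_of_le hu.1
    have hFG : ∀ u ∈ Set.Icc (-lam) lam, (∫ t in u..lam, g t) = Tc - G u := by
      intro u hu
      have h1 := intervalIntegral.integral_add_adjacent_intervals
        (hg_ii (-lam) u le_rfl hu.1 hu.2) (hg_ii u lam hu.1 hu.2 le_rfl)
      rw [hG_def, hTc_def]
      dsimp only
      rw [← h1]
      ring
    set φ : ℝ → ℂ := fun u => (M (-lam) : ℂ) * (Tc - G u) + (M lam : ℂ) * G u with hφ_def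
    have hφ0 : ∀ᵐ u ∂μ, φ u = 0 := by
      filter_upwards [hX0, ae_restrict_mem hS] with u h1 h2
      rw [hφ_def]
      dsimp only
      rw [← hFG u (hSIcc h2)]
      exact h1
    have hφ_cont : ContinuousOn φ (Set.Ioc (-lam) lam) := by
      refine ContinuousOn.mono ?_ hSIcc
      rw [hφ_def]
      exact (continuousOn_const.mul (continuousOn_const.sub hG_cont)).add
        (continuousOn_const.mul hG_cont)
    have hφ_eq : ∀ u ∈ S, φ u = 0 := by
      have hφ0' : φ =ᵐ[volume.restrict (Set.Ioc (-lam) lam)] (fun _ => 0) := hφ0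
      have h1 := Measure.eqOn_Ioc_of_ae_eq (volume : Measure ℝ) (f := φ) (g := fun _ => 0)
        hφ0' hφ_cont continuousOn_const
      intro u hu
      exact h1 hu
    have hlmem : lam ∈ S := by
      rw [hS_def]
      exact ⟨by linarith, le_rfl⟩
    have hGlam : G lam = Tc := rfl
    have hT0 : Tc = 0 := by
      have h1 := hφ_eq lam hlmem
      rw [hφ_def] at h1
      dsimp only at h1
      rw [hGlam] at h1
      have h2 : (M lam : ℂ) * Tc = 0 := by rw [← h1]; ring
      have h3 : (M lam : ℂ) ≠ 0 := Complex.ofReal_ne_zero.mpr hb.ne'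
      exact (mul_eq_zero.mp h2).resolve_left h3
    have hG0 : ∀ u ∈ Set.Icc (-lam) lam, G u = 0 := by
      intro u hu
      rcases eq_or_lt_of_le hu.1 with h | h
      · rw [hG_def]
        dsimp only
        rw [← h]
        exact intervalIntegral.integral_same
      · have h1 := hφ_eq u ⟨h, hu.2⟩
        rw [hφ_def] at h1
        dsimp only at h1
        rw [hT0] at h1
        have h2 : ((M lam : ℂ) - (M (-lam) : ℂ)) * G u = 0 := by rw [← h1]; ring
        have h3 : ((M lam : ℂ) - (M (-lam) : ℂ)) ≠ 0 := by
          rw [← Complex.ofReal_sub]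
          exact Complex.ofReal_ne_zero.mpr hba
        exact (mul_eq_zero.mp h2).resolve_left h3
    have hsub : ∀ x y, x ∈ Set.Icc (-lam) lam → y ∈ Set.Icc (-lam) lam → x ≤ y →
        (∫ t in Set.Ioc x y, g t) = 0 := by
      intro x y hx hy hxy
      have h1 := intervalIntegral.integral_add_adjacent_intervals
        (hg_ii (-lam) x le_rfl hx.1 hx.2) (hg_ii x y hx.1 hxy hy.2)
      have h2 : (∫ t in x..y, g t) = G y - G x := by
        rw [hG_def]
        dsimp only
        rw [← h1]
        ring
      rw [← intervalIntegral.integral_of_le hxy, h2, hG0 x hx, hG0 y hy, sub_zero]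
    set gS : ℝ → ℂ := S.indicator g with hgS_def
    have hgSi : Integrable gS volume := by
      rw [hgS_def, integrable_indicator_iff hS]
      exact hgi
    have hgS0 : gS =ᵐ[volume] 0 := by
      refine ae_zero_of_integral_Ioc_complex hgSi ?_
      intro x y hxy
      rw [hgS_def]
      have h1 : (∫ t in Set.Ioc x y, S.indicator g t) = ∫ t in Set.Ioc x y ∩ S, g t :=
        setIntegral_indicator hS
      rw [h1, hS_def, Set.Ioc_inter_Ioc]
      rcases lt_or_ge (max x (-lam)) (min y lam) with h | h
      · refine hsub _ _ ?_ ?_ h.le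
        · exact ⟨le_max_right _ _, le_trans h.le (min_le_right _ _)⟩
        · exact ⟨le_trans (le_max_right _ _) h.le, min_le_right _ _⟩
      · rw [Set.Ioc_eq_empty (not_lt.mpr h), setIntegral_empty]
    rw [hIcc]
    have hgz : ∀ᵐ t ∂μ, g t = 0 := by
      rw [hμ_def]
      filter_upwards [ae_restrict_of_ae hgS0, ae_restrict_mem hS] with t h1 h2
      rw [hgS_def] at h1
      simp only [Pi.zero_apply] at h1 ⊢
      rwa [Set.indicator_of_mem h2] at h1
    filter_upwards [hgz, ae_restrict_mem hS] with t h1 h2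
    rw [hg_def] at h1
    simp only [Pi.zero_apply] at h1 ⊢
    have h3 : (M t : ℂ) ≠ 0 := Complex.ofReal_ne_zero.mpr (hMpos t (hSIcc h2)).ne'
    exact (mul_eq_zero.mp h1).resolve_right h3
end

section
/- Let λ > 0 and let M : [−λ, λ] → ℝ be a continuous function with M(s) > 0 for all s and M(λ) ≠ M(−λ). Define the kernel 𝒢(t,t') = (M_t M_{t'}/(M_λ − M_{−λ})²)·( M_λ² ∫_{max(t,t')}^{λ} M_s^{−2} ds + M_λ M_{−λ} ∫_{min(t,t')}^{max(t,t')} M_s^{−2} ds + M_{−λ}² ∫_{−λ}^{min(t,t')} M_s^{−2} ds ), and for f ∈ L²([−λ,λ]) define (𝒢f)(x) = ∫_{−λ}^{λ} 𝒢(x,t) f(t) dt. Let D be the set of continuous functions g : [−λ,λ] → ℝ for which there exist a continuous function h : [−λ,λ] → ℝ and a function k ∈ L²([−λ,λ]) such that: (a) g(x)/M(x) = g(−λ)/M(−λ) + ∫_{−λ}^x h(s) ds for all x ∈ [−λ,λ]; (b) M(x)² h(x) = M(−λ)² h(−λ) + ∫_{−λ}^x k(s) ds for all x ∈ [−λ,λ];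 (c) g(−λ) = g(λ); (d) M(−λ) h(−λ) = M(λ) h(λ). Then: (1) for every f ∈ L²([−λ,λ]), the function 𝒢f belongs to D, with associated data h and k = −f·M; (2) conversely, every g ∈ D with associated data (h, k) satisfies g = 𝒢(−k/M); (3) consequently f ↦ 𝒢f is a linear bijection from L²([−λ,λ]) onto D, whose inverse is the operator ℋ g = −(1/M)·(M²·(g/M)')' = −k/M. -/
open MeasureTheory Real

/-- The integral operator `𝒢f(x) = ∫_{-λ}^λ 𝒢(x,t) f(t) dt`. -/
noncomputable def Gop (lam : ℝ) (M : ℝ → ℝ) (f : ℝ → ℝ) (x : ℝ) : ℝ :=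
  ∫ t in (-lam)..lam, Gdet lam M x t * f t

/-- `g` belongs to the domain `D` of the operator `ℋ`, with associated data `(h, k)`:
`g/M` is absolutely continuous with derivative `h`, `M²·(g/M)' = M²h` is absolutely
continuous with derivative `k ∈ L²`, and the periodic boundary conditions hold. -/
def IsDomData (lam : ℝ) (M g h k : ℝ → ℝ) : Prop :=
  ContinuousOn g (Set.Icc (-lam) lam) ∧
  ContinuousOn h (Set.Icc (-lam) lam) ∧
  MemLp k 2 (volume.restrict (Set.Icc (-lam) lam)) ∧
  (∀ x ∈ Set.Icc (-lam) lam,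
    g x / M x = g (-lam) / M (-lam) + ∫ s in (-lam)..x, h s) ∧
  (∀ x ∈ Set.Icc (-lam) lam,
    (M x) ^ 2 * h x = (M (-lam)) ^ 2 * h (-lam) + ∫ s in (-lam)..x, k s) ∧
  g (-lam) = g lam ∧
  M (-lam) * h (-lam) = M lam * h lam

private lemma II_congr {f g : ℝ → ℝ} {a b : ℝ}
    (hg : IntervalIntegrable g volume a b) (h : Set.EqOn f g (Set.uIcc a b)) :
    IntervalIntegrable f volume a b := by
  rw [intervalIntegrable_iff] at hg ⊢
  exact hg.congr_fun (fun x hx => (h (Set.uIoc_subset_uIcc hx)).symm) measurableSet_uIoc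

private lemma memLp_of_bound {F k : ℝ → ℝ} {μ : Measure ℝ}
    (hk : MemLp k 2 μ) (hF : AEStronglyMeasurable F μ) (C : ℝ)
    (hb : ∀ᵐ s ∂μ, ‖F s‖ ≤ C * ‖k s‖) : MemLp F 2 μ := by
  have h1 : MemLp (fun s => C * k s) 2 μ := hk.const_mul C
  refine h1.of_le hF ?_
  filter_upwards [hb] with s hs
  refine hs.trans ?_
  rw [norm_mul]
  gcongr
  exact le_abs_self C

private lemma fubini_tri {c x : ℝ} (hcx : c ≤ x) {u v : ℝ → ℝ}
    (hu : IntegrableOn u (Set.Ioc c x)) (hv : IntegrableOn v (Set.Ioc c x)) :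
    (∫ s in c..x, v s * ∫ t in c..s, u t) = ∫ t in c..x, (∫ s in t..x, v s) * u t := by
  set I : Set ℝ := Set.Ioc c x with hI
  have hIm : MeasurableSet I := measurableSet_Ioc
  set μ := volume.restrict I with hμ
  set F : ℝ → ℝ → ℝ :=
    fun s t => Set.indicator {p : ℝ × ℝ | p.2 ≤ p.1} (fun p => v p.1 * u p.2) (s, t) with hF
  have hFeq : Function.uncurry F =
      Set.indicator {p : ℝ × ℝ | p.2 ≤ p.1} (fun p => v p.1 * u p.2) := by
    ext p; simp [Function.uncurry, hF]
  have hsle : MeasurableSet {p : ℝ × ℝ | p.2 ≤ p.1} :=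
    measurableSet_le measurable_snd measurable_fst
  have hprod : Integrable (fun p : ℝ × ℝ => v p.1 * u p.2) (μ.prod μ) := Integrable.mul_prod hv hu
  have hFm : AEStronglyMeasurable (Function.uncurry F) (μ.prod μ) := by
    rw [hFeq, aestronglyMeasurable_iff_aemeasurable]
    exact (hprod.aemeasurable).indicator hsle
  have hFi : Integrable (Function.uncurry F) (μ.prod μ) := by
    refine (hprod.norm).mono' hFm ?_
    refine Filter.Eventually.of_forall fun p => ?_
    rw [hFeq]
    exact norm_indicator_le_norm_self _ _
  have hswap := MeasureTheory.integral_integral_swap hFi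
  have hL : (∫ s, (∫ t, F s t ∂μ) ∂μ) = ∫ s in c..x, v s * ∫ t in c..s, u t := by
    rw [intervalIntegral.integral_of_le hcx]
    refine setIntegral_congr_fun hIm fun s hs => ?_
    have h1 : (fun t => F s t) = Set.indicator (Set.Iic s) (fun t => v s * u t) := by
      ext t; by_cases h : t ≤ s <;> simp [hF, Set.indicator_apply, h]
    rw [h1, integral_indicator measurableSet_Iic, hμ,
      Measure.restrict_restrict measurableSet_Iic]
    have h2 : Set.Iic s ∩ I = Set.Ioc c s := by
      ext z
      simp only [Set.mem_inter_iff, Set.mem_Iic, hI, Set.mem_Ioc]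
      exact ⟨fun ⟨h1', h2', _⟩ => ⟨h2', h1'⟩, fun ⟨h1', h2'⟩ => ⟨h2', h1', h2'.trans hs.2⟩⟩
    rw [h2, MeasureTheory.integral_const_mul, intervalIntegral.integral_of_le hs.1.le]
  have hR : (∫ t, (∫ s, F s t ∂μ) ∂μ) = ∫ t in c..x, (∫ s in t..x, v s) * u t := by
    rw [intervalIntegral.integral_of_le hcx]
    refine setIntegral_congr_fun hIm fun t ht => ?_
    have h1 : (fun s => F s t) = Set.indicator (Set.Ici t) (fun s => v s * u t) := by
      ext s; by_cases h : t ≤ s <;> simp [hF, Set.indicator_apply, h]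
    rw [h1, integral_indicator measurableSet_Ici, hμ,
      Measure.restrict_restrict measurableSet_Ici]
    have h2 : Set.Ici t ∩ I = Set.Icc t x := by
      ext z
      simp only [Set.mem_inter_iff, Set.mem_Ici, hI, Set.mem_Ioc, Set.mem_Icc]
      exact ⟨fun ⟨h1', _, h3'⟩ => ⟨h1', h3'⟩, fun ⟨h1', h2'⟩ => ⟨h1', ht.1.trans_le h1', h2'⟩⟩
    rw [h2, MeasureTheory.integral_Icc_eq_integral_Ioc, MeasureTheory.integral_mul_const,
      intervalIntegral.integral_of_le ht.2]
  rw [← hL, ← hR]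
  exact hswap

private lemma part1 (lam : ℝ) (hlam : 0 < lam) (M : ℝ → ℝ)
    (hM : ContinuousOn M (Set.Icc (-lam) lam))
    (hMpos : ∀ s ∈ Set.Icc (-lam) lam, 0 < M s)
    (hMne : M lam ≠ M (-lam))
    (f : ℝ → ℝ) (hf : MemLp f 2 (volume.restrict (Set.Icc (-lam) lam))) :
    ∃ h : ℝ → ℝ, IsDomData lam M (Gop lam M f) h (fun s => -(f s * M s)) := by
  have hab : -lam ≤ lam := by linarith
  have hbot : (-lam) ∈ Set.Icc (-lam) lam := ⟨le_rfl, hab⟩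
  have htop : lam ∈ Set.Icc (-lam) lam := ⟨hab, le_rfl⟩
  have hMne0 : ∀ s ∈ Set.Icc (-lam) lam, M s ≠ 0 := fun s hs => (hMpos s hs).ne'
  have ha0 : M (-lam) ≠ 0 := hMne0 _ hbot
  have hb0 : M lam ≠ 0 := hMne0 _ htop
  have hΔ : M lam - M (-lam) ≠ 0 := sub_ne_zero.mpr hMne
  have hsub : ∀ {p q : ℝ}, p ∈ Set.Icc (-lam) lam → q ∈ Set.Icc (-lam) lam →
      Set.uIcc p q ⊆ Set.Icc (-lam) lam := by
    intro p q hp hq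
    rw [← Set.uIcc_of_le hab]
    exact Set.uIcc_subset_uIcc (by rw [Set.uIcc_of_le hab]; exact hp)
      (by rw [Set.uIcc_of_le hab]; exact hq)
  -- `v := 1/M²`
  have hvc : ContinuousOn (fun s => 1 / (M s) ^ 2) (Set.Icc (-lam) lam) :=
    continuousOn_const.div (hM.pow 2) (fun s hs => pow_ne_zero 2 (hMne0 s hs))
  have hvI : IntegrableOn (fun s => 1 / (M s) ^ 2) (Set.Icc (-lam) lam) :=
    hvc.integrableOn_compact isCompact_Icc
  have hvii : ∀ {p q : ℝ}, p ∈ Set.Icc (-lam) lam → q ∈ Set.Icc (-lam) lam →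
      IntervalIntegrable (fun s => 1 / (M s) ^ 2) volume p q := fun hp hq =>
    (hvc.mono (hsub hp hq)).intervalIntegrable
  haveI : IsFiniteMeasure (volume.restrict (Set.Icc (-lam) lam)) :=
    ⟨by rw [Measure.restrict_apply_univ]; exact measure_Icc_lt_top⟩
  have hfI : IntegrableOn f (Set.Icc (-lam) lam) := hf.integrable one_le_two
  obtain ⟨C, hC⟩ := isCompact_Icc.exists_bound_of_continuousOn hM
  have hMm : AEStronglyMeasurable M (volume.restrict (Set.Icc (-lam) lam)) :=
    aestronglyMeasurable_iff_aemeasurable.mpr (hM.aemeasurable measurableSet_Icc)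
  set u : ℝ → ℝ := fun t => M t * f t with hu
  have huI : IntegrableOn u (Set.Icc (-lam) lam) := by
    refine Integrable.bdd_mul (c := C) hfI hMm ?_
    filter_upwards [ae_restrict_mem measurableSet_Icc] with s hs using hC s hs
  have huii : ∀ {p q : ℝ}, p ∈ Set.Icc (-lam) lam → q ∈ Set.Icc (-lam) lam →
      IntervalIntegrable u volume p q := fun hp hq =>
    intervalIntegrable_iff.mpr
      (huI.mono_set fun z hz => hsub hp hq (Set.uIoc_subset_uIcc hz))
  set W : ℝ → ℝ := fun y => ∫ s in (-lam)..y, 1 / (M s) ^ 2 with hWdef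
  have hWc : ContinuousOn W (Set.Icc (-lam) lam) := by
    have h1 := intervalIntegral.continuousOn_primitive_interval (a := -lam) (b := lam)
      (μ := volume) (f := fun s => 1 / (M s) ^ 2) (by rwa [Set.uIcc_of_le hab])
    rwa [Set.uIcc_of_le hab] at h1
  set A : ℝ → ℝ := fun y => ∫ t in (-lam)..y, u t with hAdef
  have hAc : ContinuousOn A (Set.Icc (-lam) lam) := by
    have h1 := intervalIntegral.continuousOn_primitive_interval (a := -lam) (b := lam)
      (μ := volume) (f := u) (by rwa [Set.uIcc_of_le hab])
    rwa [Set.uIcc_of_le hab] at h1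
  have hWu : IntegrableOn (fun t => W t * u t) (Set.Icc (-lam) lam) := by
    obtain ⟨Cw, hCw⟩ := isCompact_Icc.exists_bound_of_continuousOn hWc
    refine Integrable.bdd_mul (c := Cw) huI
      (aestronglyMeasurable_iff_aemeasurable.mpr (hWc.aemeasurable measurableSet_Icc)) ?_
    filter_upwards [ae_restrict_mem measurableSet_Icc] with s hs using hCw s hs
  have hWuii : ∀ {p q : ℝ}, p ∈ Set.Icc (-lam) lam → q ∈ Set.Icc (-lam) lam →
      IntervalIntegrable (fun t => W t * u t) volume p q := fun hp hq =>
    intervalIntegrable_iff.mpr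
      (hWu.mono_set fun z hz => hsub hp hq (Set.uIoc_subset_uIcc hz))
  set B : ℝ → ℝ := fun y => ∫ t in (-lam)..y, W t * u t with hBdef
  have hBc : ContinuousOn B (Set.Icc (-lam) lam) := by
    have h1 := intervalIntegral.continuousOn_primitive_interval (a := -lam) (b := lam)
      (μ := volume) (f := fun t => W t * u t) (by rwa [Set.uIcc_of_le hab])
    rwa [Set.uIcc_of_le hab] at h1
  have hW0 : W (-lam) = 0 := intervalIntegral.integral_same
  have hA0 : A (-lam) = 0 := intervalIntegral.integral_same
  have hB0 : B (-lam) = 0 := intervalIntegral.integral_same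
  have hWdiff : ∀ {p q : ℝ}, p ∈ Set.Icc (-lam) lam → q ∈ Set.Icc (-lam) lam →
      (∫ s in p..q, 1 / (M s) ^ 2) = W q - W p := by
    intro p q hp hq
    have h1 := intervalIntegral.integral_add_adjacent_intervals (hvii hbot hp) (hvii hp hq)
    have h2 : W p + (∫ s in p..q, 1 / (M s) ^ 2) = W q := h1
    linarith
  have hAdiff : ∀ {p q : ℝ}, p ∈ Set.Icc (-lam) lam → q ∈ Set.Icc (-lam) lam →
      (∫ t in p..q, u t) = A q - A p := by
    intro p q hp hq
    have h2 : A p + (∫ t in p..q, u t) = A q :=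
      intervalIntegral.integral_add_adjacent_intervals (huii hbot hp) (huii hp hq)
    linarith
  have hBdiff : ∀ {p q : ℝ}, p ∈ Set.Icc (-lam) lam → q ∈ Set.Icc (-lam) lam →
      (∫ t in p..q, W t * u t) = B q - B p := by
    intro p q hp hq
    have h2 : B p + (∫ t in p..q, W t * u t) = B q :=
      intervalIntegral.integral_add_adjacent_intervals (hWuii hbot hp) (hWuii hp hq)
    linarith
  set c1 : ℝ := ((M lam) ^ 2 * W lam * A lam + (M (-lam) * M lam - (M lam) ^ 2) * B lam) /
    (M lam - M (-lam)) ^ 2 with hc1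
  set c2 : ℝ := M (-lam) * (M (-lam) - M lam) * A lam / (M lam - M (-lam)) ^ 2 with hc2
  -- the key formula
  have key : ∀ x ∈ Set.Icc (-lam) lam,
      Gop lam M f x = M x * (c1 + c2 * W x - W x * A x + B x) := by
    intro x hx
    have h1 : Set.EqOn (fun t => Gdet lam M x t * f t)
        (fun t => (M x * ((M lam) ^ 2 * (W lam - W x) + M lam * M (-lam) * W x) /
            (M lam - M (-lam)) ^ 2) * u t
          + (M x * ((M (-lam)) ^ 2 - M lam * M (-lam)) / (M lam - M (-lam)) ^ 2) *
            (W t * u t)) (Set.uIcc (-lam) x) := by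
      intro t ht
      rw [Set.uIcc_of_le hx.1] at ht
      have htI : t ∈ Set.Icc (-lam) lam := ⟨ht.1, ht.2.trans hx.2⟩
      have htx : t ≤ x := ht.2
      simp only [Gdet, max_eq_left htx, min_eq_right htx]
      rw [hWdiff hx htop, hWdiff htI hx, hWdiff hbot htI, hW0]
      simp only [hu]
      field_simp
      ring
    have h2 : Set.EqOn (fun t => Gdet lam M x t * f t)
        (fun t => (M x * ((M lam) ^ 2 * W lam +
            ((M (-lam)) ^ 2 - M lam * M (-lam)) * W x) / (M lam - M (-lam)) ^ 2) * u t
          + (M x * (M lam * M (-lam) - (M lam) ^ 2) / (M lam - M (-lam)) ^ 2) *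
            (W t * u t)) (Set.uIcc x lam) := by
      intro t ht
      rw [Set.uIcc_of_le hx.2] at ht
      have htI : t ∈ Set.Icc (-lam) lam := ⟨hx.1.trans ht.1, ht.2⟩
      have htx : x ≤ t := ht.1
      simp only [Gdet, max_eq_right htx, min_eq_left htx]
      rw [hWdiff htI htop, hWdiff hx htI, hWdiff hbot hx, hW0]
      simp only [hu]
      field_simp
      ring
    have I1 : IntervalIntegrable (fun t => Gdet lam M x t * f t) volume (-lam) x :=
      II_congr (((huii hbot hx).const_mul _).add ((hWuii hbot hx).const_mul _)) h1
    have I2 : IntervalIntegrable (fun t => Gdet lam M x t * f t) volume x lam :=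
      II_congr (((huii hx htop).const_mul _).add ((hWuii hx htop).const_mul _)) h2
    have hsplit := intervalIntegral.integral_add_adjacent_intervals I1 I2
    calc Gop lam M f x = ∫ t in (-lam)..lam, Gdet lam M x t * f t := rfl
      _ = (∫ t in (-lam)..x, Gdet lam M x t * f t) +
          ∫ t in x..lam, Gdet lam M x t * f t := hsplit.symm
      _ = (M x * ((M lam) ^ 2 * (W lam - W x) + M lam * M (-lam) * W x) /
            (M lam - M (-lam)) ^ 2) * (A x - A (-lam))
          + (M x * ((M (-lam)) ^ 2 - M lam * M (-lam)) / (M lam - M (-lam)) ^ 2) *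
            (B x - B (-lam))
          + ((M x * ((M lam) ^ 2 * W lam + ((M (-lam)) ^ 2 - M lam * M (-lam)) * W x) /
            (M lam - M (-lam)) ^ 2) * (A lam - A x)
          + (M x * (M lam * M (-lam) - (M lam) ^ 2) / (M lam - M (-lam)) ^ 2) *
            (B lam - B x)) := by
          rw [intervalIntegral.integral_congr h1, intervalIntegral.integral_congr h2,
            intervalIntegral.integral_add ((huii hbot hx).const_mul _)
              ((hWuii hbot hx).const_mul _),
            intervalIntegral.integral_add ((huii hx htop).const_mul _)
              ((hWuii hx htop).const_mul _),
            intervalIntegral.integral_const_mul, intervalIntegral.integral_const_mul,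
            intervalIntegral.integral_const_mul, intervalIntegral.integral_const_mul,
            hAdiff hbot hx, hBdiff hbot hx, hAdiff hx htop, hBdiff hx htop]
      _ = M x * (c1 + c2 * W x - W x * A x + B x) := by
          rw [hA0, hB0, hc1, hc2]
          field_simp
          ring
  -- the Fubini identity
  have hfub : ∀ x ∈ Set.Icc (-lam) lam,
      (∫ s in (-lam)..x, A s * (1 / (M s) ^ 2)) = W x * A x - B x := by
    intro x hx
    have hIsub : Set.Ioc (-lam) x ⊆ Set.Icc (-lam) lam :=
      fun z hz => ⟨hz.1.le, hz.2.trans hx.2⟩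
    have h1 := fubini_tri hx.1 (huI.mono_set hIsub) (hvI.mono_set hIsub)
    have e1 : (∫ s in (-lam)..x, A s * (1 / (M s) ^ 2)) =
        ∫ s in (-lam)..x, (1 / (M s) ^ 2) * ∫ t in (-lam)..s, u t :=
      intervalIntegral.integral_congr fun s _ => mul_comm _ _
    have e2 : (∫ t in (-lam)..x, (∫ s in t..x, 1 / (M s) ^ 2) * u t) =
        ∫ t in (-lam)..x, (W x - W t) * u t := by
      refine intervalIntegral.integral_congr fun t ht => ?_
      have htI : t ∈ Set.Icc (-lam) lam := hsub hbot hx ht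
      rw [hWdiff htI hx]
    have e3 : (∫ t in (-lam)..x, (W x - W t) * u t) = W x * A x - B x := by
      have e4 : (fun t => (W x - W t) * u t) = fun t => W x * u t - W t * u t :=
        funext fun t => by ring
      rw [e4, intervalIntegral.integral_sub ((huii hbot hx).const_mul _) (hWuii hbot hx),
        intervalIntegral.integral_const_mul]
    rw [e1, h1, e2, e3]
  refine ⟨fun y => (c2 - A y) / (M y) ^ 2, ?_, ?_, ?_, ?_, ?_, ?_, ?_⟩
  · exact (hM.mul (((continuousOn_const.add (continuousOn_const.mul hWc)).sub
      (hWc.mul hAc)).add hBc)).congr key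
  · exact (continuousOn_const.sub hAc).div (hM.pow 2)
      (fun s hs => pow_ne_zero 2 (hMne0 s hs))
  · refine memLp_of_bound hf ?_ C ?_
    · exact aestronglyMeasurable_iff_aemeasurable.mpr
        ((hf.aestronglyMeasurable.aemeasurable.mul
          (hM.aemeasurable measurableSet_Icc)).neg)
    · filter_upwards [ae_restrict_mem measurableSet_Icc] with s hs
      rw [norm_neg, norm_mul, mul_comm]
      exact mul_le_mul_of_nonneg_right (hC s hs) (norm_nonneg _)
  · intro x hx
    have hint : (∫ s in (-lam)..x, (c2 - A s) / (M s) ^ 2) =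
        c2 * W x - (W x * A x - B x) := by
      have e0 : Set.EqOn (fun s => (c2 - A s) / (M s) ^ 2)
          (fun s => c2 * (1 / (M s) ^ 2) - A s * (1 / (M s) ^ 2)) (Set.uIcc (-lam) x) := by
        intro s hs
        have hsI := hsub hbot hx hs
        have := hMne0 s hsI
        field_simp
      have hAvii : IntervalIntegrable (fun s => A s * (1 / (M s) ^ 2)) volume (-lam) x :=
        ((hAc.mono (hsub hbot hx)).mul (hvc.mono (hsub hbot hx))).intervalIntegrable
      rw [intervalIntegral.integral_congr e0,
        intervalIntegral.integral_sub ((hvii hbot hx).const_mul c2) hAvii,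
        intervalIntegral.integral_const_mul, hfub x hx]
    rw [key x hx, key (-lam) hbot, hW0, hA0, hB0, hint]
    field_simp [hMne0 x hx]
    ring
  · intro x hx
    have hnegint : (∫ s in (-lam)..x, -(f s * M s)) = -(A x) := by
      rw [intervalIntegral.integral_neg]
      congr 1
      have e : (fun s => f s * M s) = u := funext fun s => mul_comm _ _
      rw [e]
    beta_reduce
    rw [hnegint, hA0]
    field_simp [hMne0 x hx]
    ring
  · rw [key (-lam) hbot, key lam htop, hW0, hA0, hB0, hc1, hc2]
    field_simp
    ring
  · beta_reduce
    rw [hA0, hc2]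
    field_simp
    ring
private lemma memLp_div (lam : ℝ) (hlam : 0 < lam) (M : ℝ → ℝ)
    (hM : ContinuousOn M (Set.Icc (-lam) lam))
    (hMpos : ∀ s ∈ Set.Icc (-lam) lam, 0 < M s)
    {k : ℝ → ℝ} (hk : MemLp k 2 (volume.restrict (Set.Icc (-lam) lam))) :
    MemLp (fun s => -(k s / M s)) 2 (volume.restrict (Set.Icc (-lam) lam)) := by
  obtain ⟨x0, hx0, hmin⟩ :=
    isCompact_Icc.exists_isMinOn (Set.nonempty_Icc.mpr (by linarith)) hM
  have hd : 0 < M x0 := hMpos _ hx0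
  refine memLp_of_bound hk ?_ (1 / M x0) ?_
  · exact aestronglyMeasurable_iff_aemeasurable.mpr
      ((hk.aestronglyMeasurable.aemeasurable.div (hM.aemeasurable measurableSet_Icc)).neg)
  · filter_upwards [ae_restrict_mem measurableSet_Icc] with s hs
    have h1 : M x0 ≤ ‖M s‖ := by
      rw [Real.norm_eq_abs, abs_of_pos (hMpos s hs)]
      exact hmin hs
    rw [norm_neg, norm_div, one_div_mul_eq_div]
    exact div_le_div_of_nonneg_left (norm_nonneg _) hd h1

private lemma part2 (lam : ℝ) (hlam : 0 < lam) (M : ℝ → ℝ)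
    (hM : ContinuousOn M (Set.Icc (-lam) lam))
    (hMpos : ∀ s ∈ Set.Icc (-lam) lam, 0 < M s)
    (hMne : M lam ≠ M (-lam))
    (g h k : ℝ → ℝ) (hd : IsDomData lam M g h k) :
    ∀ x ∈ Set.Icc (-lam) lam, g x = Gop lam M (fun s => -(k s / M s)) x := by
  have hab : -lam ≤ lam := by linarith
  have hbot : (-lam) ∈ Set.Icc (-lam) lam := ⟨le_rfl, hab⟩
  have htop : lam ∈ Set.Icc (-lam) lam := ⟨hab, le_rfl⟩
  have hMne0 : ∀ s ∈ Set.Icc (-lam) lam, M s ≠ 0 := fun s hs => (hMpos s hs).ne'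
  have ha0 : M (-lam) ≠ 0 := hMne0 _ hbot
  have hb0 : M lam ≠ 0 := hMne0 _ htop
  have hΔ : M lam - M (-lam) ≠ 0 := sub_ne_zero.mpr hMne
  have hsub : ∀ {p q : ℝ}, p ∈ Set.Icc (-lam) lam → q ∈ Set.Icc (-lam) lam →
      Set.uIcc p q ⊆ Set.Icc (-lam) lam := by
    intro p q hp hq
    rw [← Set.uIcc_of_le hab]
    exact Set.uIcc_subset_uIcc (by rw [Set.uIcc_of_le hab]; exact hp)
      (by rw [Set.uIcc_of_le hab]; exact hq)
  obtain ⟨hgc, hhc, hk2, hA, hB, hper, hder⟩ := hd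
  have hfLp := memLp_div lam hlam M hM hMpos hk2
  obtain ⟨h', hd'⟩ := part1 lam hlam M hM hMpos hMne _ hfLp
  obtain ⟨hgc', hhc', hk2', hA', hB', hper', hder'⟩ := hd'
  have hkk : ∀ x ∈ Set.Icc (-lam) lam,
      (∫ s in (-lam)..x, -((fun s => -(k s / M s)) s * M s)) = ∫ s in (-lam)..x, k s := by
    intro x hx
    refine intervalIntegral.integral_congr fun s hs => ?_
    have hsI : s ∈ Set.Icc (-lam) lam := hsub hbot hx hs
    have hms := hMne0 s hsI
    beta_reduce
    field_simp
  have hch : ∀ x ∈ Set.Icc (-lam) lam,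
      (M x) ^ 2 * (h x - h' x) = (M (-lam)) ^ 2 * (h (-lam) - h' (-lam)) := by
    intro x hx
    have e1 := hB x hx
    have e2 := hB' x hx
    rw [hkk x hx] at e2
    nlinarith [e1, e2]
  have hc0 : (M (-lam)) ^ 2 * (h (-lam) - h' (-lam)) = 0 := by
    have eL := hch lam htop
    have e3 : M lam * (h lam - h' lam) = M (-lam) * (h (-lam) - h' (-lam)) := by
      linarith [hder, hder']
    have e4 : M (-lam) * (h (-lam) - h' (-lam)) * (M lam - M (-lam)) = 0 := by
      linear_combination eL - M lam * e3
    have e5 : h (-lam) - h' (-lam) = 0 := by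
      by_contra hne
      exact (mul_ne_zero (mul_ne_zero ha0 hne) hΔ) e4
    rw [e5, mul_zero]
  have hh : ∀ x ∈ Set.Icc (-lam) lam, h x = h' x := by
    intro x hx
    have e := (hch x hx).trans hc0
    rcases mul_eq_zero.mp e with e' | e'
    · exact absurd e' (pow_ne_zero 2 (hMne0 x hx))
    · exact eq_of_sub_eq_zero e'
  have hgg : ∀ x ∈ Set.Icc (-lam) lam,
      g x / M x - g (-lam) / M (-lam) =
      Gop lam M (fun s => -(k s / M s)) x / M x -
        Gop lam M (fun s => -(k s / M s)) (-lam) / M (-lam) := by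
    intro x hx
    have e1 := hA x hx
    have e2 := hA' x hx
    have e3 : (∫ s in (-lam)..x, h s) = ∫ s in (-lam)..x, h' s :=
      intervalIntegral.integral_congr fun s hs => hh s (hsub hbot hx hs)
    rw [e1, e2, e3]
    ring
  have eT := hgg lam htop
  rw [← hper, ← hper'] at eT
  have e5 : (g (-lam) - Gop lam M (fun s => -(k s / M s)) (-lam)) *
      ((M lam)⁻¹ - (M (-lam))⁻¹) = 0 := by
    linear_combination eT
  have hinv : (M lam)⁻¹ - (M (-lam))⁻¹ ≠ 0 := by
    refine sub_ne_zero.mpr fun hcon => hMne ?_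
    rw [← inv_inv (M lam), hcon, inv_inv]
  have egG : g (-lam) = Gop lam M (fun s => -(k s / M s)) (-lam) := by
    rcases mul_eq_zero.mp e5 with e' | e'
    · exact eq_of_sub_eq_zero e'
    · exact absurd e' hinv
  intro x hx
  have e6 := hgg x hx
  rw [egG] at e6
  have e7 : g x / M x = Gop lam M (fun s => -(k s / M s)) x / M x := by linarith
  rw [div_eq_div_iff (hMne0 x hx) (hMne0 x hx)] at e7
  exact mul_right_cancel₀ (hMne0 x hx) e7

private lemma cont_vanish {a b : ℝ} (hab : a < b) {φ : ℝ → ℝ}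
    (hφ : ContinuousOn φ (Set.Icc a b))
    (h0 : ∀ x ∈ Set.Icc a b, (∫ s in a..x, φ s) = 0) :
    ∀ x ∈ Set.Icc a b, φ x = 0 := by
  have hIoo : ∀ x ∈ Set.Ioo a b, φ x = 0 := by
    intro x hx
    have hxI : x ∈ Set.Icc a b := Set.Ioo_subset_Icc_self hx
    have hmem : Set.Icc a b ∈ nhds x := Icc_mem_nhds hx.1 hx.2
    have hca : ContinuousAt φ x := (hφ x hxI).continuousAt hmem
    have hsub : Set.uIcc a x ⊆ Set.Icc a b := by
      rw [Set.uIcc_of_le hxI.1]; exact Set.Icc_subset_Icc le_rfl hxI.2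
    have hii : IntervalIntegrable φ volume a x := (hφ.mono hsub).intervalIntegrable
    have hmeas : StronglyMeasurableAtFilter φ (nhds x) volume :=
      (hφ.mono Set.Ioo_subset_Icc_self).stronglyMeasurableAtFilter isOpen_Ioo x hx
    have hd : HasDerivAt (fun u => ∫ s in a..u, φ s) (φ x) x :=
      intervalIntegral.integral_hasDerivAt_right hii hmeas hca
    have hz : (fun u => ∫ s in a..u, φ s) =ᶠ[nhds x] (fun _ => (0 : ℝ)) := by
      filter_upwards [hmem] with y hy using h0 y hy
    have hd0 : HasDerivAt (fun _ : ℝ => (0 : ℝ)) (φ x) x := hd.congr_of_eventuallyEq hz.symm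
    exact hd0.unique (hasDerivAt_const x 0)
  intro x hx
  have hne : (nhdsWithin x (Set.Ioo a b)).NeBot := by
    rw [← mem_closure_iff_nhdsWithin_neBot, closure_Ioo hab.ne]
    exact hx
  have ht1 : Filter.Tendsto φ (nhdsWithin x (Set.Ioo a b)) (nhds (φ x)) :=
    (hφ x hx).mono Set.Ioo_subset_Icc_self
  have ht2 : Filter.Tendsto φ (nhdsWithin x (Set.Ioo a b)) (nhds 0) := by
    refine Filter.Tendsto.congr' ?_ tendsto_const_nhds
    filter_upwards [self_mem_nhdsWithin] with y hy using (hIoo y hy).symm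
  exact tendsto_nhds_unique ht1 ht2

private lemma ae_vanish {a b : ℝ} (hab : a ≤ b) {u : ℝ → ℝ}
    (hu : IntegrableOn u (Set.Icc a b))
    (h0 : ∀ x ∈ Set.Icc a b, (∫ s in a..x, u s) = 0) :
    u =ᵐ[volume.restrict (Set.Icc a b)] 0 := by
  set ub : ℝ → ℝ := (Set.Icc a b).indicator u with hub
  have hubi : Integrable ub volume := (integrable_indicator_iff measurableSet_Icc).mpr hu
  have hFz : ∀ y : ℝ, (∫ s in a..y, ub s) = 0 := by
    intro y
    rcases le_or_gt a y with hy | hy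
    · rw [intervalIntegral.integral_of_le hy, hub, integral_indicator measurableSet_Icc,
        Measure.restrict_restrict measurableSet_Icc]
      have h2 : Set.Icc a b ∩ Set.Ioc a y = Set.Ioc a (min y b) := by
        ext z
        simp only [Set.mem_inter_iff, Set.mem_Icc, Set.mem_Ioc, le_min_iff]
        constructor
        · rintro ⟨⟨_, h4⟩, h1, h2⟩; exact ⟨h1, h2, h4⟩
        · rintro ⟨h1, h2, h3⟩; exact ⟨⟨h1.le, h3⟩, h1, h2⟩
      rw [h2, ← intervalIntegral.integral_of_le (le_min hy hab)]
      exact h0 _ ⟨le_min hy hab, min_le_right _ _⟩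
    · rw [intervalIntegral.integral_symm, intervalIntegral.integral_of_le hy.le, hub,
        integral_indicator measurableSet_Icc, Measure.restrict_restrict measurableSet_Icc]
      have h2 : volume (Set.Icc a b ∩ Set.Ioc y a) = 0 := by
        refine measure_mono_null (fun z hz => ?_) (volume_singleton (a := a))
        have := le_antisymm hz.2.2 hz.1.1
        simp [this]
      rw [show volume.restrict (Set.Icc a b ∩ Set.Ioc y a) = 0 from
        Measure.restrict_eq_zero.mpr h2, integral_zero_measure, neg_zero]
  have hIoc : ∀ p q : ℝ, (∫ s in Set.Ioc p q, ub s) = 0 := by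
    intro p q
    rcases le_or_gt p q with hpq | hpq
    · have hii : ∀ c d : ℝ, IntervalIntegrable ub volume c d := fun c d => hubi.intervalIntegrable
      have := intervalIntegral.integral_add_adjacent_intervals (hii a p) (hii p q)
      rw [hFz p, hFz q] at this
      rw [← intervalIntegral.integral_of_le hpq]
      linarith
    · rw [Set.Ioc_eq_empty (by exact not_lt.mpr hpq.le), Measure.restrict_empty, integral_zero_measure]
  have hgen : ∀ s : Set ℝ, MeasurableSet s → (∫ x in s, ub x) = 0 := by
    have hborel : (inferInstance : MeasurableSpace ℝ) =
        MeasurableSpace.generateFrom { S : Set ℝ | ∃ l u', l < u' ∧ Set.Ioc l u' = S } := by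
      rw [← borel_eq_generateFrom_Ioc ℝ]
      exact BorelSpace.measurable_eq
    refine MeasurableSpace.induction_on_inter hborel (isPiSystem_Ioc (id : ℝ → ℝ) id) (by simp) ?_ ?_ ?_
    · rintro S ⟨l, u', _, rfl⟩
      exact hIoc l u'
    · intro t ht hC
      have := MeasureTheory.integral_add_compl ht hubi
      have htot : (∫ x, ub x) = 0 := by
        rw [hub, integral_indicator measurableSet_Icc, MeasureTheory.integral_Icc_eq_integral_Ioc,
          ← intervalIntegral.integral_of_le hab]
        exact h0 b ⟨hab, le_rfl⟩
      linarith
    · intro f hdisj hmeas hC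
      rw [integral_iUnion hmeas hdisj hubi.integrableOn]
      simp [hC]
  have hae : ub =ᵐ[volume] 0 := by
    refine hubi.ae_eq_zero_of_forall_setIntegral_eq_zero ?_
    intro s hs _
    exact hgen s hs
  have h1 : ub =ᵐ[volume.restrict (Set.Icc a b)] 0 := ae_restrict_of_ae hae
  filter_upwards [ae_restrict_mem measurableSet_Icc, h1] with s hs h2
  rw [← h2, hub, Set.indicator_of_mem hs]


/-- The operator `f ↦ 𝒢f` is a linear bijection from `L²([-λ,λ])` onto the domain `D`,
with inverse `ℋg = -(1/M)(M²(g/M)')' = -k/M`. -/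
theorem Gop_bijection_onto_domain
    (lam : ℝ) (hlam : 0 < lam) (M : ℝ → ℝ)
    (hM : ContinuousOn M (Set.Icc (-lam) lam))
    (hMpos : ∀ s ∈ Set.Icc (-lam) lam, 0 < M s)
    (hMne : M lam ≠ M (-lam)) :
    (∀ f : ℝ → ℝ, MemLp f 2 (volume.restrict (Set.Icc (-lam) lam)) →
      ∃ h : ℝ → ℝ, IsDomData lam M (Gop lam M f) h (fun s => -(f s * M s))) ∧
    (∀ g h k : ℝ → ℝ, IsDomData lam M g h k →
      ∀ x ∈ Set.Icc (-lam) lam, g x = Gop lam M (fun s => -(k s / M s)) x) ∧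
    (∀ f₁ f₂ : ℝ → ℝ, MemLp f₁ 2 (volume.restrict (Set.Icc (-lam) lam)) →
      MemLp f₂ 2 (volume.restrict (Set.Icc (-lam) lam)) →
      (∀ x ∈ Set.Icc (-lam) lam, Gop lam M f₁ x = Gop lam M f₂ x) →
      f₁ =ᵐ[volume.restrict (Set.Icc (-lam) lam)] f₂) ∧
    (∀ g : ℝ → ℝ, (∃ h k : ℝ → ℝ, IsDomData lam M g h k) →
      ∃ f : ℝ → ℝ, MemLp f 2 (volume.restrict (Set.Icc (-lam) lam)) ∧
        ∀ x ∈ Set.Icc (-lam) lam, Gop lam M f x = g x) := by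
  have hab : -lam ≤ lam := by linarith
  have hab' : -lam < lam := by linarith
  have hbot : (-lam) ∈ Set.Icc (-lam) lam := ⟨le_rfl, hab⟩
  have htop : lam ∈ Set.Icc (-lam) lam := ⟨hab, le_rfl⟩
  have hMne0 : ∀ s ∈ Set.Icc (-lam) lam, M s ≠ 0 := fun s hs => (hMpos s hs).ne'
  have hsub : ∀ {p q : ℝ}, p ∈ Set.Icc (-lam) lam → q ∈ Set.Icc (-lam) lam →
      Set.uIcc p q ⊆ Set.Icc (-lam) lam := by
    intro p q hp hq
    rw [← Set.uIcc_of_le hab]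
    exact Set.uIcc_subset_uIcc (by rw [Set.uIcc_of_le hab]; exact hp)
      (by rw [Set.uIcc_of_le hab]; exact hq)
  haveI : IsFiniteMeasure (volume.restrict (Set.Icc (-lam) lam)) :=
    ⟨by rw [Measure.restrict_apply_univ]; exact measure_Icc_lt_top⟩
  refine ⟨fun f hf => part1 lam hlam M hM hMpos hMne f hf,
    fun g h k hd => part2 lam hlam M hM hMpos hMne g h k hd, ?_, ?_⟩
  · intro f₁ f₂ hf₁ hf₂ heq
    obtain ⟨h₁, _, hh₁c, hk₁, ha₁, hb₁, _, _⟩ := part1 lam hlam M hM hMpos hMne f₁ hf₁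
    obtain ⟨h₂, _, hh₂c, hk₂, ha₂, hb₂, _, _⟩ := part1 lam hlam M hM hMpos hMne f₂ hf₂
    have hφ0 : ∀ x ∈ Set.Icc (-lam) lam,
        (∫ s in (-lam)..x, (h₁ s - h₂ s)) = 0 := by
      intro x hx
      rw [intervalIntegral.integral_sub
        ((hh₁c.mono (hsub hbot hx)).intervalIntegrable)
        ((hh₂c.mono (hsub hbot hx)).intervalIntegrable)]
      have e1 := ha₁ x hx
      have e2 := ha₂ x hx
      rw [heq x hx, heq (-lam) hbot] at e1
      linarith
    have hh12 : ∀ x ∈ Set.Icc (-lam) lam, h₁ x - h₂ x = 0 :=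
      cont_vanish hab' (hh₁c.sub hh₂c) hφ0
    have hk₁i : IntegrableOn (fun s => -(f₁ s * M s)) (Set.Icc (-lam) lam) :=
      hk₁.integrable one_le_two
    have hk₂i : IntegrableOn (fun s => -(f₂ s * M s)) (Set.Icc (-lam) lam) :=
      hk₂.integrable one_le_two
    have hk0 : ∀ x ∈ Set.Icc (-lam) lam,
        (∫ s in (-lam)..x, (-(f₁ s * M s) - -(f₂ s * M s))) = 0 := by
      intro x hx
      rw [intervalIntegral.integral_sub
        (intervalIntegrable_iff.mpr
          (hk₁i.mono_set fun z hz => hsub hbot hx (Set.uIoc_subset_uIcc hz)))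
        (intervalIntegrable_iff.mpr
          (hk₂i.mono_set fun z hz => hsub hbot hx (Set.uIoc_subset_uIcc hz)))]
      have e1 := hb₁ x hx
      have e2 := hb₂ x hx
      have r1 : h₁ x = h₂ x := eq_of_sub_eq_zero (hh12 x hx)
      have r2 : h₁ (-lam) = h₂ (-lam) := eq_of_sub_eq_zero (hh12 (-lam) hbot)
      rw [r1, r2] at e1
      linarith
    have hae := ae_vanish hab (hk₁i.sub hk₂i) hk0
    filter_upwards [hae, ae_restrict_mem measurableSet_Icc] with s hs1 hs2
    have hms : M s ≠ 0 := hMne0 s hs2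
    have h3 : f₁ s * M s = f₂ s * M s := by
      have : -(f₁ s * M s) - -(f₂ s * M s) = 0 := hs1
      linarith
    exact mul_right_cancel₀ hms h3
  · rintro g ⟨h, k, hd⟩
    exact ⟨fun s => -(k s / M s), memLp_div lam hlam M hM hMpos hd.2.2.1,
      fun x hx => (part2 lam hlam M hM hMpos hMne g h k hd x hx).symm⟩
end

section
/- For every m > 0 and all t, t' ≥ 0, ∫_0^{∞} √( m/(2π x³) ) · exp( −m(x−1)²/(2x) ) · exp( −(m/2)( t' x + t/x ) ) dx = ( 1/√(1+t) ) · exp( −m( √((1+t)(1+t')) − 1 ) ). -/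
open MeasureTheory Real

open Set

lemma glasser_integrable {c : ℝ} (hc : 0 < c) :
    IntegrableOn (fun y : ℝ => Real.exp (-(y - c/y)^2)) (Ioi 0) := by
  have hmeas : AEStronglyMeasurable (fun y : ℝ => Real.exp (-(y - c/y)^2))
      (volume.restrict (Ioi 0)) := by
    apply ContinuousOn.aestronglyMeasurable _ measurableSet_Ioi
    exact (continuousOn_id.sub ((continuousOn_const).div continuousOn_id
      (fun x hx => ne_of_gt hx))).pow 2 |>.neg.rexp
  refine Integrable.mono' (g := fun y => Real.exp (2*c) * Real.exp (-(1:ℝ)*y^2))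
    (((integrable_exp_neg_mul_sq one_pos).const_mul _).restrict) hmeas ?_
  filter_upwards [ae_restrict_mem measurableSet_Ioi] with y hy
  rw [Real.norm_eq_abs, abs_of_pos (Real.exp_pos _), ← Real.exp_add]
  apply Real.exp_le_exp.2
  have h1 : (0:ℝ) ≤ (c/y)^2 := sq_nonneg _
  have hy0 : y ≠ 0 := ne_of_gt hy
  have h2 : y * (c / y) = c := by field_simp
  nlinarith [sq_nonneg (y - c/y)]

lemma glasser_reflect {c : ℝ} (hc : 0 < c) :
    ∫ y in Ioi (0:ℝ), (c / y^2) * Real.exp (-(y - c/y)^2)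
      = ∫ y in Ioi (0:ℝ), Real.exp (-(y - c/y)^2) := by
  have himg : (fun y : ℝ => c / y) '' Ioi 0 = Ioi 0 := by
    ext x
    constructor
    · rintro ⟨y, hy, rfl⟩
      exact div_pos hc hy
    · intro hx
      exact ⟨c / x, div_pos hc hx, by field_simp⟩
  have hderiv : ∀ y ∈ Ioi (0:ℝ), HasDerivWithinAt (fun y : ℝ => c / y) (-(c / y^2)) (Ioi 0) y := by
    intro y hy
    have : HasDerivAt (fun y : ℝ => c / y) (c * (-(y^2)⁻¹)) y := by
      simpa [div_eq_mul_inv] using (hasDerivAt_inv (ne_of_gt hy)).const_mul c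
    exact (this.congr_deriv (by ring)).hasDerivWithinAt
  have hinj : InjOn (fun y : ℝ => c / y) (Ioi 0) := by
    intro x hx y hy h
    have hx0 : x ≠ 0 := ne_of_gt hx
    have hy0 : y ≠ 0 := ne_of_gt hy
    field_simp at h
    exact h.symm
  have := integral_image_eq_integral_abs_deriv_smul measurableSet_Ioi hderiv hinj
    (fun y : ℝ => Real.exp (-(y - c/y)^2))
  rw [himg] at this
  rw [this]
  apply setIntegral_congr_fun measurableSet_Ioi
  intro y hy
  have hy0 : y ≠ 0 := ne_of_gt hy
  have h1 : |(-(c / y^2))| = c / y^2 := by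
    rw [abs_neg, abs_of_pos (div_pos hc (pow_pos hy 2))]
  have h2 : c / (c / y) = y := by field_simp
  simp only [smul_eq_mul]
  rw [h1, h2]
  congr 2
  ring

lemma glasser_value {c : ℝ} (hc : 0 < c) :
    ∫ y in Ioi (0:ℝ), Real.exp (-(y - c/y)^2) = Real.sqrt Real.pi / 2 := by
  have himg : (fun y : ℝ => y - c / y) '' Ioi 0 = univ := by
    refine eq_univ_iff_forall.2 fun u => ?_
    have hs : 0 < Real.sqrt (u^2 + 4*c) := Real.sqrt_pos.2 (by nlinarith)
    have hs2 : Real.sqrt (u^2 + 4*c) ^ 2 = u^2 + 4*c := Real.sq_sqrt (by nlinarith)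
    have habs : |u| ≤ Real.sqrt (u^2 + 4*c) := by
      rw [← Real.sqrt_sq_eq_abs]
      exact Real.sqrt_le_sqrt (by nlinarith)
    have hy : 0 < (u + Real.sqrt (u^2 + 4*c)) / 2 := by
      have := neg_abs_le u
      cases' abs_cases u with h h <;> nlinarith
    refine ⟨(u + Real.sqrt (u^2 + 4*c)) / 2, hy, ?_⟩
    have hy0 : (u + Real.sqrt (u^2 + 4*c)) / 2 ≠ 0 := ne_of_gt hy
    have hdiv : c / ((u + Real.sqrt (u^2 + 4*c)) / 2)
        = (u + Real.sqrt (u^2 + 4*c)) / 2 - u := by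
      rw [div_eq_iff hy0]
      nlinarith
    simp only
    rw [hdiv]
    ring
  have hderiv : ∀ y ∈ Ioi (0:ℝ),
      HasDerivWithinAt (fun y : ℝ => y - c / y) (1 + c / y^2) (Ioi 0) y := by
    intro y hy
    have h1 : HasDerivAt (fun y : ℝ => c / y) (c * (-(y^2)⁻¹)) y := by
      simpa [div_eq_mul_inv] using (hasDerivAt_inv (ne_of_gt hy)).const_mul c
    have := (hasDerivAt_id y).sub h1
    exact (this.congr_deriv (by ring)).hasDerivWithinAt
  have hinj : InjOn (fun y : ℝ => y - c / y) (Ioi 0) := by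
    have : StrictMonoOn (fun y : ℝ => y - c / y) (Ioi 0) := by
      intro x hx y hy hxy
      have : c / y < c / x := div_lt_div_of_pos_left hc hx hxy
      simp only
      linarith
    exact this.injOn
  have key := integral_image_eq_integral_abs_deriv_smul measurableSet_Ioi hderiv hinj
    (fun u : ℝ => Real.exp (-u^2))
  rw [himg] at key
  have hL : ∫ u in (univ : Set ℝ), Real.exp (-u^2) = Real.sqrt Real.pi := by
    rw [Measure.restrict_univ]
    simpa using integral_gaussian 1
  have hR : ∫ y in Ioi (0:ℝ), |1 + c / y^2| • Real.exp (-((fun y : ℝ => y - c/y) y)^2)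
      = (∫ y in Ioi (0:ℝ), Real.exp (-(y - c/y)^2))
        + ∫ y in Ioi (0:ℝ), (c / y^2) * Real.exp (-(y - c/y)^2) := by
    rw [← integral_add (glasser_integrable hc)]
    · apply setIntegral_congr_fun measurableSet_Ioi
      intro y hy
      have h1 : |1 + c / y^2| = 1 + c / y^2 := by
        rw [abs_of_pos]
        positivity
      simp only [smul_eq_mul]
      rw [h1]
      ring
    · -- integrability of (c/y^2) * exp
      have himg2 : (fun y : ℝ => c / y) '' Ioi 0 = Ioi 0 := by
        ext x
        constructor
        · rintro ⟨y, hy, rfl⟩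
          exact div_pos hc hy
        · intro hx
          exact ⟨c / x, div_pos hc hx, by field_simp⟩
      have hderiv2 : ∀ y ∈ Ioi (0:ℝ),
          HasDerivWithinAt (fun y : ℝ => c / y) (-(c / y^2)) (Ioi 0) y := by
        intro y hy
        have : HasDerivAt (fun y : ℝ => c / y) (c * (-(y^2)⁻¹)) y := by
          simpa [div_eq_mul_inv] using (hasDerivAt_inv (ne_of_gt hy)).const_mul c
        exact (this.congr_deriv (by ring)).hasDerivWithinAt
      have hinj2 : InjOn (fun y : ℝ => c / y) (Ioi 0) := by
        intro x hx y hy h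
        have hx0 : x ≠ 0 := ne_of_gt hx
        have hy0 : y ≠ 0 := ne_of_gt hy
        field_simp at h
        exact h.symm
      have := (integrableOn_image_iff_integrableOn_abs_deriv_smul measurableSet_Ioi hderiv2 hinj2
        (fun y : ℝ => Real.exp (-(y - c/y)^2))).1 (by rw [himg2]; exact glasser_integrable hc)
      apply this.congr_fun _ measurableSet_Ioi
      intro y hy
      have hy0 : y ≠ 0 := ne_of_gt hy
      have h1 : |(-(c / y^2))| = c / y^2 := by
        rw [abs_neg, abs_of_pos (div_pos hc (pow_pos hy 2))]
      have h2 : c / (c / y) = y := by field_simp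
      simp only [smul_eq_mul]
      rw [h1, h2]
      congr 2
      ring
  rw [hL, hR, glasser_reflect hc] at key
  linarith

lemma ig_base {a b : ℝ} (ha : 0 < a) (hb : 0 < b) :
    ∫ x in Ioi (0:ℝ), Real.exp (-(a*x + b/x)) / (x * Real.sqrt x)
      = Real.sqrt (Real.pi / b) * Real.exp (-(2 * Real.sqrt (a*b))) := by
  set c := Real.sqrt (a*b) with hc_def
  have hc : 0 < c := Real.sqrt_pos.2 (mul_pos ha hb)
  have hc2 : c^2 = a*b := Real.sq_sqrt (mul_pos ha hb).le
  have himg : (fun y : ℝ => b / y^2) '' Ioi 0 = Ioi 0 := by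
    ext x
    constructor
    · rintro ⟨y, hy, rfl⟩
      exact div_pos hb (pow_pos hy 2)
    · intro hx
      refine ⟨Real.sqrt (b / x), Real.sqrt_pos.2 (div_pos hb hx), ?_⟩
      simp only
      rw [Real.sq_sqrt (div_pos hb hx).le]
      field_simp
  have hderiv : ∀ y ∈ Ioi (0:ℝ),
      HasDerivWithinAt (fun y : ℝ => b / y^2) (-(2*b / y^3)) (Ioi 0) y := by
    intro y hy
    have hy0 : y ≠ 0 := ne_of_gt hy
    have h1 : HasDerivAt (fun y : ℝ => b / y^2)
        (b * (-(2 * y^1) / (y^2)^2)) y := by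
      simpa [div_eq_mul_inv] using ((hasDerivAt_pow 2 y).inv (pow_ne_zero 2 hy0)).const_mul b
    refine (h1.congr_deriv ?_).hasDerivWithinAt
    field_simp
  have hinj : InjOn (fun y : ℝ => b / y^2) (Ioi 0) := by
    intro x hx y hy h
    simp only at h
    have hx0 : x ≠ 0 := ne_of_gt hx
    have hy0 : y ≠ 0 := ne_of_gt hy
    have h2 : x^2 = y^2 := by
      field_simp at h
      linarith
    calc x = Real.sqrt (x^2) := (Real.sqrt_sq (le_of_lt hx)).symm
      _ = Real.sqrt (y^2) := by rw [h2]
      _ = y := Real.sqrt_sq (le_of_lt hy)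
  have key := integral_image_eq_integral_abs_deriv_smul measurableSet_Ioi hderiv hinj
    (fun x : ℝ => Real.exp (-(a*x + b/x)) / (x * Real.sqrt x))
  rw [himg] at key
  rw [key]
  have hcong : ∫ y in Ioi (0:ℝ),
      |(-(2*b / y^3))| • (Real.exp (-(a*(b/y^2) + b/(b/y^2))) / ((b/y^2) * Real.sqrt (b/y^2)))
      = ∫ y in Ioi (0:ℝ), (2 / Real.sqrt b * Real.exp (-(2*c))) * Real.exp (-(y - c/y)^2) := by
    apply setIntegral_congr_fun measurableSet_Ioi
    intro y hy
    have hy0 : y ≠ 0 := ne_of_gt hy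
    have hsb : 0 < Real.sqrt b := Real.sqrt_pos.2 hb
    have h1 : |(-(2*b / y^3))| = 2*b / y^3 := by
      rw [abs_neg, abs_of_pos (div_pos (by linarith) (pow_pos hy 3))]
    have h2 : b / (b / y^2) = y^2 := by field_simp
    have h3 : Real.sqrt (b / y^2) = Real.sqrt b / y := by
      rw [show b / y^2 = (Real.sqrt b / y)^2 by
        rw [div_pow, Real.sq_sqrt hb.le],
        Real.sqrt_sq (div_nonneg (Real.sqrt_nonneg b) (le_of_lt (mem_Ioi.mp hy)))]
    have h4 : -(a*(b/y^2) + y^2) = -(2*c) + -(y - c/y)^2 := by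
      have : y * (c/y) = c := by field_simp
      have hab : a * (b/y^2) = c^2 / y^2 := by rw [hc2]; ring
      rw [hab]
      have : (c/y)^2 = c^2/y^2 := by ring
      nlinarith [this]
    simp only [smul_eq_mul]
    rw [h1, h2, h3, h4, Real.exp_add]
    field_simp
  rw [hcong, integral_const_mul, glasser_value hc]
  rw [Real.sqrt_div Real.pi_pos.le]
  field_simp

/-- Laplace-transform identity for the Inverse Gaussian density `IG(1,m)`. -/
theorem invGaussian_laplace_identity (m t t' : ℝ) (hm : 0 < m) (ht : 0 ≤ t) (ht' : 0 ≤ t') :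
    (∫ x in Set.Ioi (0:ℝ),
        Real.sqrt (m / (2 * Real.pi * x ^ 3)) * Real.exp (-(m * (x - 1) ^ 2) / (2 * x)) *
          Real.exp (-(m / 2) * (t' * x + t / x)))
      = (1 / Real.sqrt (1 + t)) * Real.exp (-(m * (Real.sqrt ((1 + t) * (1 + t')) - 1))) := by
  have h1t : (0:ℝ) < 1 + t := by linarith
  have h1t' : (0:ℝ) < 1 + t' := by linarith
  have ha : 0 < m * (1+t') / 2 := by positivity
  have hb : 0 < m * (1+t) / 2 := by positivity
  set A := m * (1+t') / 2 with hA
  set B := m * (1+t) / 2 with hB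
  have hstep : (∫ x in Set.Ioi (0:ℝ),
        Real.sqrt (m / (2 * Real.pi * x ^ 3)) * Real.exp (-(m * (x - 1) ^ 2) / (2 * x)) *
          Real.exp (-(m / 2) * (t' * x + t / x)))
      = (Real.sqrt (m / (2*Real.pi)) * Real.exp m)
          * ∫ x in Ioi (0:ℝ), Real.exp (-(A*x + B/x)) / (x * Real.sqrt x) := by
    rw [← integral_const_mul]
    apply setIntegral_congr_fun measurableSet_Ioi
    intro x hx
    have hx0 : (0:ℝ) < x := hx
    have hsq : Real.sqrt (m/(2*Real.pi*x^3)) = Real.sqrt (m/(2*Real.pi)) / (x * Real.sqrt x) := by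
      rw [show m/(2*Real.pi*x^3) = (m/(2*Real.pi))/x^3 from (div_div m (2*Real.pi) (x^3)).symm,
        Real.sqrt_div (by positivity), show x^3 = x^2*x by ring,
        Real.sqrt_mul (sq_nonneg x), Real.sqrt_sq hx0.le]
    have hexp : Real.exp (-(m*(x-1)^2)/(2*x)) * Real.exp (-(m/2)*(t'*x + t/x))
        = Real.exp m * Real.exp (-(A*x + B/x)) := by
      rw [← Real.exp_add, ← Real.exp_add]
      congr 1
      rw [hA, hB]
      field_simp
      ring
    simp only
    rw [mul_assoc, hexp, hsq]
    ring
  rw [hstep, ig_base ha hb]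
  have hab : A * B = (m/2)^2 * ((1+t) * (1+t')) := by rw [hA, hB]; ring
  have hsab : Real.sqrt (A*B) = (m/2) * Real.sqrt ((1+t) * (1+t')) := by
    rw [hab, Real.sqrt_mul (sq_nonneg _), Real.sqrt_sq (by positivity)]
  have hcoef : Real.sqrt (m/(2*Real.pi)) * Real.sqrt (Real.pi / B) = 1 / Real.sqrt (1+t) := by
    rw [← Real.sqrt_mul (by positivity),
      show m/(2*Real.pi) * (Real.pi / B) = 1/(1+t) by
        rw [hB]; field_simp,
      one_div, Real.sqrt_inv, one_div]
  have hexp2 : Real.exp m * Real.exp (-(2 * Real.sqrt (A*B)))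
      = Real.exp (-(m * (Real.sqrt ((1 + t) * (1 + t')) - 1))) := by
    rw [hsab, ← Real.exp_add]
    congr 1
    ring
  calc Real.sqrt (m/(2*Real.pi)) * Real.exp m
        * (Real.sqrt (Real.pi / B) * Real.exp (-(2 * Real.sqrt (A*B))))
      = (Real.sqrt (m/(2*Real.pi)) * Real.sqrt (Real.pi / B))
        * (Real.exp m * Real.exp (-(2 * Real.sqrt (A*B)))) := by ring
    _ = (1 / Real.sqrt (1 + t)) * Real.exp (-(m * (Real.sqrt ((1 + t) * (1 + t')) - 1))) := by
      rw [hcoef, hexp2]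
end

section
/- Let N ≥ 3 be an integer; indices are elements of ℤ/Nℤ. For a, b ∈ ℤ/Nℤ let d(a,b) ∈ {0, …, N−1} be the representative of b − a, and define the directed cyclic product ∏→_{k=a}^{b} v_k := ∏_{l=0}^{d(a,b)} v_{a+l} and the directed cyclic sum Σ→_{k=a}^{b} v_k := Σ_{l=0}^{d(a,b)} v_{a+l} (taken over the d(a,b)+1 indices a, a+1, …, b along the positive orientation). Let u : ℤ/Nℤ → ℝ with u_k > 0 for all k and Π := ∏_{k ∈ ℤ/Nℤ} u_k ≠ 1, and let R be the N×N matrix with R(i,i) = u_i² + 1, R(i,i+1) = −u_i, R(i,i−1) = −u_{i−1}, and R(i,j) = 0 for all other pairs. Then R is invertible and its inverse is given by: (a) for j ∉ {i−1, i, i+1}: R^{−1}(i,j) = [ ∏→_{k=i}^{j−1} u_k · ( 1 + Σ→_{k=j+1}^{i−1} ∏→_{l=k}^{i−1} u_l² ) + ∏→_{k=j}^{i−1} u_k · ( 1 + Σ→_{k=i+1}^{j−1} ∏→_{l=k}^{j−1} u_l² ) ] / (Π − 1)²; (b) R^{−1}(i,i+1) = [ u_i · ( 1 + Σ→_{k=i+2}^{i−1}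 ∏→_{l=k}^{i−1} u_l² ) + ∏→_{k=i+1}^{i−1} u_k ] / (Π − 1)²; (c) R^{−1}(i,i−1) = [ u_{i−1} · ( 1 + Σ→_{k=i+1}^{i−2} ∏→_{l=k}^{i−2} u_l² ) + ∏→_{k=i}^{i−2} u_k ] / (Π − 1)²; (d) R^{−1}(i,i) = ( 1 + Σ→_{k=i+1}^{i−1} ∏→_{l=k}^{i−1} u_l² ) / (Π − 1)². -/
open Matrix

/-- Directed cyclic product `∏→_{k=a}^{b} v_k` along the positive orientation of `ℤ/Nℤ`. -/
noncomputable def cycProd (N : ℕ) [NeZero N] (v : ZMod N → ℝ) (a b : ZMod N) : ℝ :=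
  ∏ l ∈ Finset.range ((b - a).val + 1), v (a + l)

/-- Directed cyclic sum `Σ→_{k=a}^{b} f_k` along the positive orientation of `ℤ/Nℤ`. -/
noncomputable def cycSum (N : ℕ) [NeZero N] (f : ZMod N → ℝ) (a b : ZMod N) : ℝ :=
  ∑ l ∈ Finset.range ((b - a).val + 1), f (a + l)

/-- The conjugated discrete Schrödinger operator on the circle with `N` vertices:
`R(i,i) = u_i² + 1`, `R(i,i+1) = -u_i`, `R(i,i-1) = -u_{i-1}`, `R(i,j) = 0` otherwise. -/
noncomputable def Rcirc (N : ℕ) [NeZero N] (u : ZMod N → ℝ) :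
    Matrix (ZMod N) (ZMod N) ℝ :=
  Matrix.of fun i j => if j = i then u i ^ 2 + 1
    else if j = i + 1 then -u i
    else if j = i - 1 then -u (i - 1) else 0

/-!
Let `B` be the weighted cyclic shift, `B(i, i + 1) = u_i`; for `N ≥ 3` one has
`R = (1 - B)(1 - Bᵀ)`. Let `S(a, b)` be the product of `u` over the half-open arc `[a, b)`.
Peeling off the first or the last factor gives `S(a, b) = u_a S(a + 1, b)` and
`S(a, b) = S(a, b - 1) u_{b-1}` for `a ≠ b`, while both expressions equal `Π` for `a = b`.
Hence `(1 - B) S = S (1 - B) = (1 - Π) • 1`, and `R⁻¹ = Sᵀ S / (Π - 1)²`.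

For `i ≠ j`, the entry `(Sᵀ S)(i, j) = Σ_k S(k, i) S(k, j)` is computed by cutting the circle
into the arcs `(j, i]` and `(i, j]`. On the first arc, the path from `k` to `j` passes through
`i`, so `S(k, j) = S(k, i) S(i, j)`. The symmetric identity holds on the second arc. The two
resulting sums are the bracketed factors of the formula.
-/

open Finset

namespace ZMod

variable {N : ℕ} [NeZero N]

theorem val_sub_one_add_one {x : ZMod N} (hx : x ≠ 0) : (x - 1).val + 1 = x.val := by
  have h1 : (1 : ZMod N).val = 1 := val_one'' fun hN => by subst hN; exact hx (Subsingleton.elim _ _)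
  have hpos := val_pos.mpr hx
  rw [val_sub (by omega)]
  omega

theorem val_neg_one_add_one : (-1 : ZMod N).val + 1 = N := by
  obtain ⟨n, rfl⟩ := Nat.exists_eq_add_one_of_ne_zero (NeZero.ne N)
  rw [val_neg_one]

theorem val_add_val_neg {x : ZMod N} (hx : x ≠ 0) : x.val + (-x).val = N := by
  rw [neg_val, if_neg hx]
  have := val_lt x
  omega

omit [NeZero N] in
theorem natCast_ne_zero_of_lt {n : ℕ} (h0 : 0 < n) (h : n < N) : (n : ZMod N) ≠ 0 := by
  rw [Ne, natCast_eq_zero_iff]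
  exact Nat.not_dvd_of_pos_of_lt h0 h

@[to_additive]
theorem prod_range_add_eq_prod {M : Type*} [CommMonoid M] (f : ZMod N → M) (a : ZMod N) :
    ∏ l ∈ range N, f (a + l) = ∏ k, f k :=
  prod_nbij' (fun l => a + l) (fun k => (k - a).val) (fun _ _ => mem_univ _)
    (fun _ _ => mem_range.mpr (val_lt _))
    (fun l hl => by simp [val_cast_of_lt (mem_range.mp hl)])
    (fun k _ => by simp) (fun _ _ => rfl)

end ZMod

section arcProd

variable {N : ℕ} {M : Type*} [CommMonoid M]

/-- The directed product `∏→_{l=a}^{b-1} u_l` over the half-open arc `[a, b)`; unlike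
`cycProd`, it is empty for `a = b`. -/
def arcProd (u : ZMod N → M) (a b : ZMod N) : M :=
  ∏ l ∈ range (b - a).val, u (a + l)

variable (u : ZMod N → M) {a b c : ZMod N}

@[simp]
theorem arcProd_self (a : ZMod N) : arcProd u a a = 1 := by
  simp [arcProd]

theorem arcProd_pow (n : ℕ) (a b : ZMod N) :
    arcProd (fun l => u l ^ n) a b = arcProd u a b ^ n :=
  prod_pow _ _ _

variable [NeZero N]

theorem arcProd_mul_arcProd (h : (b - a).val + (c - b).val < N) :
    arcProd u a b * arcProd u b c = arcProd u a c := by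
  have hval : (c - a).val = (b - a).val + (c - b).val := by
    rw [← ZMod.val_add_of_lt h, sub_add_sub_cancel']
  simp only [arcProd, hval, prod_range_add]
  congr 1
  refine prod_congr rfl fun l _ => ?_
  rw [Nat.cast_add, ← add_assoc, ZMod.natCast_zmod_val, add_sub_cancel]

theorem mul_arcProd_add_one (h : a ≠ b) : u a * arcProd u (a + 1) b = arcProd u a b := by
  have hval : (b - (a + 1)).val + 1 = (b - a).val := by
    rw [sub_add_eq_sub_sub, ZMod.val_sub_one_add_one (sub_ne_zero.mpr h.symm)]
  rw [arcProd, arcProd, ← hval, prod_range_succ', mul_comm]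
  simp [add_assoc, add_comm (1 : ZMod N)]

theorem arcProd_add_one (h : a + 1 ≠ a) : arcProd u a (a + 1) = u a := by
  rw [← mul_arcProd_add_one u h.symm, arcProd_self, mul_one]

theorem arcProd_sub_one_mul (h : a ≠ b) : arcProd u a (b - 1) * u (b - 1) = arcProd u a b := by
  have hval : (b - 1 - a).val + 1 = (b - a).val := by
    rw [sub_right_comm, ZMod.val_sub_one_add_one (sub_ne_zero.mpr h.symm)]
  rw [arcProd, arcProd, ← hval, prod_range_succ, ZMod.natCast_zmod_val, add_sub_cancel]

theorem mul_arcProd_add_one_self (a : ZMod N) : u a * arcProd u (a + 1) a = ∏ k, u k :=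
  calc u a * arcProd u (a + 1) a = ∏ l ∈ range ((-1 : ZMod N).val + 1), u (a + l) := by
        rw [prod_range_succ', arcProd, show a - (a + 1) = -1 by ring, mul_comm]
        simp [add_assoc, add_comm (1 : ZMod N)]
    _ = ∏ k, u k := by rw [ZMod.val_neg_one_add_one, ZMod.prod_range_add_eq_prod]

theorem arcProd_sub_one_mul_self (a : ZMod N) : arcProd u a (a - 1) * u (a - 1) = ∏ k, u k :=
  calc arcProd u a (a - 1) * u (a - 1) = ∏ l ∈ range ((-1 : ZMod N).val + 1), u (a + l) := by
        rw [prod_range_succ, arcProd, show a - 1 - a = -1 by ring, ZMod.natCast_zmod_val,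
          ← sub_eq_add_neg]
    _ = ∏ k, u k := by rw [ZMod.val_neg_one_add_one, ZMod.prod_range_add_eq_prod]

end arcProd

section cycShift

variable {N : ℕ} [NeZero N] {α : Type*}

def cycShift [Zero α] (u : ZMod N → α) : Matrix (ZMod N) (ZMod N) α :=
  of fun i j => if j = i + 1 then u i else 0

section Semiring

variable [Semiring α] (u : ZMod N → α)

theorem cycShift_mul_apply (A : Matrix (ZMod N) (ZMod N) α) (i j : ZMod N) :
    (cycShift u * A) i j = u i * A (i + 1) j := by
  simp [cycShift, mul_apply]

theorem mul_cycShift_apply (A : Matrix (ZMod N) (ZMod N) α) (i j : ZMod N) :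
    (A * cycShift u) i j = A i (j - 1) * u (j - 1) := by
  simp [cycShift, mul_apply, eq_comm (a := j), ← eq_sub_iff_add_eq]

theorem cycShift_mul_transpose : cycShift u * (cycShift u)ᵀ = diagonal fun i => u i ^ 2 := by
  ext i j
  rw [cycShift_mul_apply, transpose_apply, diagonal_apply]
  by_cases h : i = j
  · simp [cycShift, h, sq]
  · simp [cycShift, h]

end Semiring

variable [CommRing α] (u : ZMod N → α)

theorem one_sub_cycShift_mul_arcProd :
    (1 - cycShift u) * of (arcProd u) = (1 - ∏ k, u k) • 1 := by
  ext a b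
  rw [sub_mul, one_mul, Matrix.sub_apply, cycShift_mul_apply, Matrix.smul_apply, one_apply]
  by_cases h : a = b
  · simp [h, mul_arcProd_add_one_self]
  · simp [h, mul_arcProd_add_one u h]

theorem arcProd_mul_one_sub_cycShift :
    of (arcProd u) * (1 - cycShift u) = (1 - ∏ k, u k) • 1 := by
  ext a b
  rw [mul_sub, mul_one, Matrix.sub_apply, mul_cycShift_apply, Matrix.smul_apply, one_apply]
  by_cases h : a = b
  · simp [h, arcProd_sub_one_mul_self]
  · simp [h, arcProd_sub_one_mul u h]

end cycShift

section Rcirc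

variable {N : ℕ} [NeZero N]

theorem Rcirc_eq (hN : 3 ≤ N) (u : ZMod N → ℝ) :
    Rcirc N u = (1 - cycShift u) * (1 - (cycShift u)ᵀ) := by
  have h1 : (1 : ZMod N) ≠ 0 := mod_cast ZMod.natCast_ne_zero_of_lt (n := 1) one_pos (by omega)
  have h2 : (2 : ZMod N) ≠ 0 := mod_cast ZMod.natCast_ne_zero_of_lt (n := 2) two_pos (by omega)
  rw [show (1 - cycShift u) * (1 - (cycShift u)ᵀ) =
      1 + cycShift u * (cycShift u)ᵀ - cycShift u - (cycShift u)ᵀ by noncomm_ring,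
    cycShift_mul_transpose]
  ext i j
  simp only [Rcirc, cycShift, of_apply, Matrix.add_apply, Matrix.sub_apply, one_apply,
    diagonal_apply, transpose_apply]
  rcases eq_or_ne j i with rfl | h0
  · simp only [↓reduceIte, left_eq_add, h1, sub_zero]
    ring
  rcases eq_or_ne j (i + 1) with rfl | hp
  · have : i ≠ i + 1 + 1 := by rw [add_assoc, one_add_one_eq_two]; simp [h2]
    simp [h1, this]
  rcases eq_or_ne j (i - 1) with rfl | hm
  · simp [h0.symm, h1, hp]
  · have : i ≠ j + 1 := fun h => hm (eq_sub_of_add_eq h.symm)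
    simp [h0, hp, hm, Ne.symm h0, this]

theorem Rcirc_mul_arcProd (hN : 3 ≤ N) (u : ZMod N → ℝ) :
    Rcirc N u * ((of (arcProd u))ᵀ * of (arcProd u)) = ((∏ k, u k) - 1) ^ 2 • 1 := by
  have hT : (1 - (cycShift u)ᵀ) * (of (arcProd u))ᵀ = (1 - ∏ k, u k) • 1 := by
    rw [← transpose_one, ← transpose_sub, ← transpose_mul, arcProd_mul_one_sub_cycShift,
      transpose_smul, transpose_one]
  rw [Rcirc_eq hN, mul_assoc, ← mul_assoc (1 - (cycShift u)ᵀ), hT, Matrix.smul_mul, one_mul,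
    Matrix.mul_smul, one_sub_cycShift_mul_arcProd, smul_smul]
  congr 1
  ring

theorem Rcirc_mul_inv_smul (hN : 3 ≤ N) {u : ZMod N → ℝ} (hprod : (∏ k, u k) ≠ 1) :
    Rcirc N u * ((((∏ k, u k) - 1) ^ 2)⁻¹ • ((of (arcProd u))ᵀ * of (arcProd u))) = 1 := by
  rw [Matrix.mul_smul, Rcirc_mul_arcProd hN, smul_smul,
    inv_mul_cancel₀ (pow_ne_zero 2 (sub_ne_zero.mpr hprod)), one_smul]

theorem Rcirc_inv_apply (hN : 3 ≤ N) {u : ZMod N → ℝ} (hprod : (∏ k, u k) ≠ 1) (i j : ZMod N) :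
    (Rcirc N u)⁻¹ i j = (∑ k, arcProd u k i * arcProd u k j) / ((∏ k, u k) - 1) ^ 2 := by
  rw [inv_eq_right_inv (Rcirc_mul_inv_smul hN hprod), Matrix.smul_apply, mul_apply, smul_eq_mul,
    inv_mul_eq_div]
  rfl

end Rcirc

section cycSum

variable {N : ℕ} [NeZero N] {a b : ZMod N}

theorem cycSum_self (f : ZMod N → ℝ) (a : ZMod N) : cycSum N f a a = f a := by
  simp [cycSum]

theorem cycSum_add_one_self (f : ZMod N → ℝ) (a : ZMod N) : cycSum N f (a + 1) a = ∑ k, f k := by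
  rw [cycSum, show a - (a + 1) = -1 by ring, ZMod.val_neg_one_add_one, ZMod.sum_range_add_eq_sum]

theorem sum_eq_cycSum_add_cycSum (f : ZMod N → ℝ) (h : a ≠ b) :
    ∑ k, f k = cycSum N f (a + 1) b + cycSum N f (b + 1) a := by
  have hab : (b - (a + 1)).val + 1 = (b - a).val := by
    rw [sub_add_eq_sub_sub, ZMod.val_sub_one_add_one (sub_ne_zero.mpr h.symm)]
  have hba : (a - (b + 1)).val + 1 = (a - b).val := by
    rw [sub_add_eq_sub_sub, ZMod.val_sub_one_add_one (sub_ne_zero.mpr h)]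
  have hN : (b - a).val + (a - b).val = N := by
    rw [← neg_sub b a, ZMod.val_add_val_neg (sub_ne_zero.mpr h.symm)]
  calc ∑ k, f k = ∑ l ∈ range ((b - a).val + (a - b).val), f (a + 1 + l) := by
        rw [hN, ZMod.sum_range_add_eq_sum]
    _ = _ := by
        rw [sum_range_add, cycSum, cycSum, hab, hba]
        congr 1
        refine sum_congr rfl fun l _ => ?_
        rw [Nat.cast_add, ZMod.natCast_zmod_val]
        congr 1
        ring

theorem cycProd_sub_one (v : ZMod N → ℝ) (h : a ≠ b) : cycProd N v a (b - 1) = arcProd v a b := by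
  rw [cycProd, arcProd, sub_right_comm, ZMod.val_sub_one_add_one (sub_ne_zero.mpr h.symm)]

theorem one_add_cycSum_cycProd_sq (v : ZMod N → ℝ) (h : a ≠ b) :
    1 + cycSum N (fun k => cycProd N (fun l => v l ^ 2) k (b - 1)) a (b - 1) =
      cycSum N (fun k => arcProd v k b ^ 2) a b := by
  rw [cycSum, cycSum, sub_right_comm, ZMod.val_sub_one_add_one (sub_ne_zero.mpr h.symm),
    sum_range_succ, ZMod.natCast_zmod_val, add_sub_cancel, arcProd_self, one_pow, add_comm]
  congr 1
  refine sum_congr rfl fun l hl => ?_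
  have hne : a + l ≠ b := by
    rintro rfl
    rw [add_sub_cancel_left, ZMod.val_cast_of_lt ((mem_range.mp hl).trans (ZMod.val_lt _))] at hl
    exact lt_irrefl _ (mem_range.mp hl)
  rw [cycProd_sub_one _ hne, arcProd_pow]

theorem cycSum_arcProd_mul_arcProd (v : ZMod N → ℝ) (h : a ≠ b) :
    cycSum N (fun k => arcProd v k b * arcProd v k a) (a + 1) b =
      arcProd v b a * cycSum N (fun k => arcProd v k b ^ 2) (a + 1) b := by
  rw [cycSum, cycSum, mul_sum]
  refine sum_congr rfl fun l hl => ?_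
  have hl : l + 1 ≤ (b - a).val := by
    rw [mem_range, sub_add_eq_sub_sub, ZMod.val_sub_one_add_one (sub_ne_zero.mpr h.symm)] at hl
    omega
  have hlN : l + 1 < N := hl.trans_lt (ZMod.val_lt _)
  have hval : (b - (a + 1 + l)).val + (a - b).val < N := by
    rw [show b - (a + 1 + l) = b - a - ((l + 1 : ℕ) : ZMod N) by push_cast; ring,
      ZMod.val_sub (by rwa [ZMod.val_cast_of_lt hlN]), ZMod.val_cast_of_lt hlN, ← neg_sub b a]
    have := ZMod.val_add_val_neg (sub_ne_zero.mpr h.symm)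
    omega
  rw [← arcProd_mul_arcProd v hval]
  ring

theorem sum_arcProd_mul_arcProd (v : ZMod N → ℝ) {i j : ZMod N} (h : i ≠ j) :
    ∑ k, arcProd v k i * arcProd v k j =
      arcProd v i j * cycSum N (fun k => arcProd v k i ^ 2) (j + 1) i +
        arcProd v j i * cycSum N (fun k => arcProd v k j ^ 2) (i + 1) j := by
  rw [sum_eq_cycSum_add_cycSum _ h.symm, cycSum_arcProd_mul_arcProd v h.symm,
    ← cycSum_arcProd_mul_arcProd v h]
  simp only [mul_comm]

end cycSum

theorem Rcirc_inv_explicit_general (N : ℕ) [NeZero N] (hN : 3 ≤ N) (u : ZMod N → ℝ)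
    (hprod : (∏ k, u k) ≠ 1) :
    IsUnit (Rcirc N u).det ∧
    (∀ i j : ZMod N, j ≠ i → j ≠ i + 1 → j ≠ i - 1 →
      (Rcirc N u)⁻¹ i j =
        (cycProd N u i (j - 1) *
            (1 + cycSum N (fun k => cycProd N (fun l => u l ^ 2) k (i - 1)) (j + 1) (i - 1)) +
          cycProd N u j (i - 1) *
            (1 + cycSum N (fun k => cycProd N (fun l => u l ^ 2) k (j - 1)) (i + 1) (j - 1))) /
          ((∏ k, u k) - 1) ^ 2) ∧
    (∀ i : ZMod N,
      (Rcirc N u)⁻¹ i (i + 1) =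
        (u i * (1 + cycSum N (fun k => cycProd N (fun l => u l ^ 2) k (i - 1)) (i + 2) (i - 1)) +
          cycProd N u (i + 1) (i - 1)) / ((∏ k, u k) - 1) ^ 2) ∧
    (∀ i : ZMod N,
      (Rcirc N u)⁻¹ i (i - 1) =
        (u (i - 1) *
            (1 + cycSum N (fun k => cycProd N (fun l => u l ^ 2) k (i - 2)) (i + 1) (i - 2)) +
          cycProd N u i (i - 2)) / ((∏ k, u k) - 1) ^ 2) ∧
    (∀ i : ZMod N,
      (Rcirc N u)⁻¹ i i =
        (1 + cycSum N (fun k => cycProd N (fun l => u l ^ 2) k (i - 1)) (i + 1) (i - 1)) /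
          ((∏ k, u k) - 1) ^ 2) := by
  have h1 : (1 : ZMod N) ≠ 0 := mod_cast ZMod.natCast_ne_zero_of_lt (n := 1) one_pos (by omega)
  have h2 : (2 : ZMod N) ≠ 0 := mod_cast ZMod.natCast_ne_zero_of_lt (n := 2) two_pos (by omega)
  have hsucc (i : ZMod N) : i + 1 ≠ i := add_ne_left.mpr h1
  have hpred (i : ZMod N) : i - 1 ≠ i := fun h => h1 (sub_eq_self.mp h)
  refine ⟨isUnit_det_of_right_inverse (Rcirc_mul_inv_smul hN hprod), ?_, fun i => ?_, fun i => ?_,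
    fun i => ?_⟩
  · intro i j hji hj1 hjm
    rw [Rcirc_inv_apply hN hprod, sum_arcProd_mul_arcProd u hji.symm, cycProd_sub_one u hji.symm,
      cycProd_sub_one u hji, one_add_cycSum_cycProd_sq u fun h => hjm (eq_sub_of_add_eq h),
      one_add_cycSum_cycProd_sq u fun h => hj1 h.symm]
  · have h2i : i + 1 + 1 ≠ i := by rw [add_assoc, one_add_one_eq_two]; exact add_ne_left.mpr h2
    rw [Rcirc_inv_apply hN hprod, sum_arcProd_mul_arcProd u (hsucc i).symm, cycSum_self,
      arcProd_self, one_pow, mul_one, arcProd_add_one u (hsucc i),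
      show i + 2 = i + 1 + 1 by ring, one_add_cycSum_cycProd_sq u h2i, cycProd_sub_one u (hsucc i)]
  · have h2i : i + 1 ≠ i - 1 := fun h => h2 (by linear_combination h)
    have harc : arcProd u (i - 1) i = u (i - 1) := by
      simpa using arcProd_add_one u (hsucc (i - 1))
    rw [Rcirc_inv_apply hN hprod, sum_arcProd_mul_arcProd u (hpred i).symm, sub_add_cancel,
      cycSum_self, arcProd_self, one_pow, mul_one, harc, show i - 2 = i - 1 - 1 by ring,
      cycProd_sub_one u (hpred i).symm, one_add_cycSum_cycProd_sq u h2i, add_comm]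
  · rw [Rcirc_inv_apply hN hprod, one_add_cycSum_cycProd_sq u (hsucc i), cycSum_add_one_self]
    simp only [sq]

/-- Explicit inversion of the circle operator `R`. -/
theorem Rcirc_inv_explicit (N : ℕ) [NeZero N] (hN : 3 ≤ N) (u : ZMod N → ℝ)
    (hu : ∀ k, 0 < u k) (hprod : (∏ k, u k) ≠ 1) :
    IsUnit (Rcirc N u).det ∧
    (∀ i j : ZMod N, j ≠ i → j ≠ i + 1 → j ≠ i - 1 →
      (Rcirc N u)⁻¹ i j =
        (cycProd N u i (j - 1) *
            (1 + cycSum N (fun k => cycProd N (fun l => u l ^ 2) k (i - 1)) (j + 1) (i - 1)) +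
          cycProd N u j (i - 1) *
            (1 + cycSum N (fun k => cycProd N (fun l => u l ^ 2) k (j - 1)) (i + 1) (j - 1))) /
          ((∏ k, u k) - 1) ^ 2) ∧
    (∀ i : ZMod N,
      (Rcirc N u)⁻¹ i (i + 1) =
        (u i * (1 + cycSum N (fun k => cycProd N (fun l => u l ^ 2) k (i - 1)) (i + 2) (i - 1)) +
          cycProd N u (i + 1) (i - 1)) / ((∏ k, u k) - 1) ^ 2) ∧
    (∀ i : ZMod N,
      (Rcirc N u)⁻¹ i (i - 1) =
        (u (i - 1) *
            (1 + cycSum N (fun k => cycProd N (fun l => u l ^ 2) k (i - 2)) (i + 1) (i - 2)) +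
          cycProd N u i (i - 2)) / ((∏ k, u k) - 1) ^ 2) ∧
    (∀ i : ZMod N,
      (Rcirc N u)⁻¹ i i =
        (1 + cycSum N (fun k => cycProd N (fun l => u l ^ 2) k (i - 1)) (i + 1) (i - 1)) /
          ((∏ k, u k) - 1) ^ 2) :=
  Rcirc_inv_explicit_general N hN u hprod
end
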